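/- arXiv:2011.01546 — 9 statements merged into one kernel-verified Lean document; each statement's English description precedes it below -/
import Mathlib

section
/- Let f : ℝ → ℝ be a non-negative, not identically zero, smooth, integrable, even function with f' ≤ 0 on [0, ∞). Then for every increasing function g : ℝ → ℝ, the convolution f * g is strictly increasing (its derivative is positive everywhere). -/
open MeasureTheory Filter

open Set

lemma ioi_eq_iUnion' : Set.Ioi (0:ℝ) = ⋃ n : ℕ, Set.Ioc (n:ℝ) (n+1) := by
  ext x
  simp only [mem_Ioi, mem_iUnion, mem_Ioc]
  constructor
  · intro hx
    have h2 : 1 ≤ ⌈x⌉₊ := Nat.one_le_ceil_iff.mpr hx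
    refine ⟨⌈x⌉₊ - 1, ?_, ?_⟩
    · have h1 : (⌈x⌉₊ : ℝ) < x + 1 := Nat.ceil_lt_add_one hx.le
      rw [Nat.cast_sub h2]
      push_cast
      linarith
    · have h1 := Nat.le_ceil x
      rw [Nat.cast_sub h2]
      push_cast
      linarith
  · rintro ⟨n, hn, -⟩
    exact (Nat.cast_nonneg n).trans_lt hn

lemma ioc_pairwise_disjoint :
    Pairwise (Function.onFun Disjoint (fun n : ℕ => Set.Ioc (n:ℝ) (n+1))) := by
  intro i j hij
  apply Set.disjoint_left.mpr
  intro x hxi hxj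
  rcases hij.lt_or_gt with h | h
  · have : (i:ℝ) + 1 ≤ j := by exact_mod_cast Nat.succ_le_of_lt h
    exact absurd (hxi.2.trans this) (not_le.mpr hxj.1)
  · have : (j:ℝ) + 1 ≤ i := by exact_mod_cast Nat.succ_le_of_lt h
    exact absurd (hxj.2.trans this) (not_le.mpr hxi.1)

lemma integrableOn_Iio_of_neg {F : ℝ → ℝ}
    (h : MeasureTheory.IntegrableOn (fun w => F (-w)) (Set.Ioi (0:ℝ))) :
    MeasureTheory.IntegrableOn F (Set.Iio (0:ℝ)) := by
  rw [← integrable_indicator_iff measurableSet_Iio]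
  rw [← integrable_indicator_iff measurableSet_Ioi] at h
  have e : (fun w => (Set.Ioi (0:ℝ)).indicator (fun w => F (-w)) (-w))
      = (Set.Iio (0:ℝ)).indicator F := by
    funext w
    by_cases hw : w < 0 <;>
      simp [Set.indicator_apply, Set.mem_Ioi, Set.mem_Iio, neg_pos, hw]
  have := h.comp_neg
  rwa [e] at this

lemma integrableOn_Ioi_of_neg' {F : ℝ → ℝ}
    (h : MeasureTheory.IntegrableOn (fun w => F (-w)) (Set.Iio (0:ℝ))) :
    MeasureTheory.IntegrableOn F (Set.Ioi (0:ℝ)) := by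
  rw [← integrable_indicator_iff measurableSet_Ioi]
  rw [← integrable_indicator_iff measurableSet_Iio] at h
  have e : (fun w => (Set.Iio (0:ℝ)).indicator (fun w => F (-w)) (-w))
      = (Set.Ioi (0:ℝ)).indicator F := by
    funext w
    by_cases hw : 0 < w <;>
      simp [Set.indicator_apply, Set.mem_Ioi, Set.mem_Iio, neg_neg, hw, neg_lt_zero]
  have := h.comp_neg
  rwa [e] at this

lemma setIntegral_Iio_neg (F : ℝ → ℝ) :
    ∫ w in Set.Iio (0:ℝ), F w = ∫ w in Set.Ioi (0:ℝ), F (-w) := by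
  rw [← MeasureTheory.integral_indicator measurableSet_Iio,
    ← MeasureTheory.integral_indicator measurableSet_Ioi]
  rw [← MeasureTheory.integral_neg_eq_self ((Set.Iio (0:ℝ)).indicator F)]
  congr 1
  funext w
  by_cases hw : 0 < w <;>
    simp [Set.indicator_apply, Set.mem_Ioi, Set.mem_Iio, neg_neg, hw]

lemma blocks_lemma (f : ℝ → ℝ) (hf_nonneg : ∀ x, 0 ≤ f x)
    (hf_diff : Differentiable ℝ f) (hD_cont : Continuous (deriv f))
    (hf_anti : AntitoneOn f (Set.Ici 0))
    (hf_deriv : ∀ x, 0 ≤ x → deriv f x ≤ 0)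
    (ζ : ℝ → ℝ) (hζ : Monotone ζ) (hζ0 : 0 ≤ ζ 0)
    (hint : Integrable fun w => f w * ζ (w + 2)) :
    ∫⁻ w in Set.Ioi (0:ℝ), ENNReal.ofReal (-deriv f w * ζ w) < ⊤ := by
  have hζnn : ∀ w : ℝ, 0 ≤ w → 0 ≤ ζ w := fun w hw => hζ0.trans (hζ hw)
  have hPblock : ∀ u v : ℝ, u ≤ v → ∫ s in Set.Ioc u v, (-deriv f s) = f u - f v := by
    intro u v huv
    rw [← intervalIntegral.integral_of_le huv, intervalIntegral.integral_neg,
      intervalIntegral.integral_deriv_eq_sub (fun x _ => hf_diff x)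
        (hD_cont.intervalIntegrable u v)]
    ring
  have key : ∀ n : ℕ, ∫⁻ w in Set.Ioc (n:ℝ) (n+1), ENNReal.ofReal (-deriv f w * ζ w)
      ≤ ENNReal.ofReal ((f n - f (n+1)) * ζ (n+1)) := by
    intro n
    have h1 : ∫⁻ w in Set.Ioc (n:ℝ) (n+1), ENNReal.ofReal (-deriv f w * ζ w)
        ≤ ∫⁻ w in Set.Ioc (n:ℝ) (n+1), ENNReal.ofReal (-deriv f w * ζ (n+1)) := by
      apply MeasureTheory.setLIntegral_mono
        ((hD_cont.neg.mul continuous_const).measurable.ennreal_ofReal)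
      intro w hw
      apply ENNReal.ofReal_le_ofReal
      have hw0 : (0:ℝ) ≤ w := (Nat.cast_nonneg n).trans hw.1.le
      exact mul_le_mul_of_nonneg_left (hζ hw.2) (by linarith [hf_deriv w hw0])
    have h2 : ∫⁻ w in Set.Ioc (n:ℝ) (n+1), ENNReal.ofReal (-deriv f w * ζ (n+1))
        = ENNReal.ofReal ((f n - f (n+1)) * ζ (n+1)) := by
      rw [← MeasureTheory.ofReal_integral_eq_lintegral_ofReal]
      · rw [MeasureTheory.integral_mul_const, hPblock n (n+1) (by linarith)]
      · exact (hD_cont.neg.mul continuous_const).integrableOn_Ioc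
      · filter_upwards [ae_restrict_mem measurableSet_Ioc] with w hw
        have hw0 : (0:ℝ) ≤ w := (Nat.cast_nonneg n).trans hw.1.le
        exact mul_nonneg (by linarith [hf_deriv w hw0]) (hζnn _ (by linarith))
    exact h1.trans_eq h2
  rw [ioi_eq_iUnion', MeasureTheory.lintegral_iUnion (fun n => measurableSet_Ioc)
    ioc_pairwise_disjoint]
  calc ∑' n : ℕ, ∫⁻ w in Set.Ioc (n:ℝ) (n+1), ENNReal.ofReal (-deriv f w * ζ w)
      ≤ ∑' n : ℕ, ENNReal.ofReal ((f n - f (n+1)) * ζ (n+1)) := ENNReal.tsum_le_tsum key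
    _ < ⊤ := by
        rw [tsum_eq_zero_add' ENNReal.summable]
        apply ENNReal.add_lt_top.mpr
        constructor
        · exact ENNReal.ofReal_lt_top
        · have hterm : ∀ m : ℕ, ENNReal.ofReal ((f ((m:ℝ)+1) - f ((m:ℝ)+2)) * ζ ((m:ℝ)+2))
              ≤ ∫⁻ w in Set.Ioc (m:ℝ) (m+1), ENNReal.ofReal (f w * ζ (w + 2)) := by
            intro m
            have hμ : volume (Set.Ioc (m:ℝ) (m+1)) = 1 := by
              rw [Real.volume_Ioc]
              simp
            have h3 : ENNReal.ofReal ((f ((m:ℝ)+1) - f ((m:ℝ)+2)) * ζ ((m:ℝ)+2))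
                = ∫⁻ _ in Set.Ioc (m:ℝ) (m+1),
                    ENNReal.ofReal ((f ((m:ℝ)+1) - f ((m:ℝ)+2)) * ζ ((m:ℝ)+2)) := by
              rw [MeasureTheory.setLIntegral_const, hμ, mul_one]
            rw [h3]
            apply MeasureTheory.setLIntegral_mono
              ((hf_diff.continuous.measurable.mul
                (hζ.measurable.comp (measurable_add_const 2))).ennreal_ofReal)
            intro w hw
            apply ENNReal.ofReal_le_ofReal
            have hw0 : (0:ℝ) ≤ w := (Nat.cast_nonneg m).trans hw.1.le
            have hfw : f ((m:ℝ)+1) ≤ f w :=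
              hf_anti (Set.mem_Ici.mpr hw0) (Set.mem_Ici.mpr (by linarith)) hw.2
            have hzw : ζ ((m:ℝ)+2) ≤ ζ (w+2) := hζ (by linarith [hw.1])
            have hz2 : (0:ℝ) ≤ ζ ((m:ℝ)+2) := hζnn _ (by positivity)
            calc (f ((m:ℝ)+1) - f ((m:ℝ)+2)) * ζ ((m:ℝ)+2)
                ≤ f ((m:ℝ)+1) * ζ ((m:ℝ)+2) := by
                  apply mul_le_mul_of_nonneg_right _ hz2
                  linarith [hf_nonneg ((m:ℝ)+2)]
              _ ≤ f w * ζ (w+2) :=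
                  mul_le_mul hfw hzw hz2 (hf_nonneg w)
          calc ∑' m : ℕ, ENNReal.ofReal ((f ((m+1:ℕ):ℝ) - f (((m+1:ℕ):ℝ)+1)) * ζ (((m+1:ℕ):ℝ)+1))
              = ∑' m : ℕ, ENNReal.ofReal ((f ((m:ℝ)+1) - f ((m:ℝ)+2)) * ζ ((m:ℝ)+2)) := by
                apply tsum_congr
                intro m
                push_cast
                ring_nf
            _ ≤ ∑' m : ℕ, ∫⁻ w in Set.Ioc (m:ℝ) (m+1), ENNReal.ofReal (f w * ζ (w + 2)) :=
                ENNReal.tsum_le_tsum hterm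
            _ = ∫⁻ w in Set.Ioi (0:ℝ), ENNReal.ofReal (f w * ζ (w + 2)) := by
                rw [ioi_eq_iUnion', MeasureTheory.lintegral_iUnion
                  (fun n => measurableSet_Ioc) ioc_pairwise_disjoint]
            _ ≤ ∫⁻ w, ENNReal.ofReal (f w * ζ (w + 2)) :=
                MeasureTheory.setLIntegral_le_lintegral _ _
            _ ≤ ∫⁻ w, ‖f w * ζ (w + 2)‖₊ := by
                apply MeasureTheory.lintegral_mono
                intro w
                exact Real.ofReal_le_enorm _
            _ < ⊤ := hint.2

lemma lemA1 (f : ℝ → ℝ) (hf_nonneg : ∀ x, 0 ≤ f x)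
    (hf_diff : Differentiable ℝ f) (hD_cont : Continuous (deriv f))
    (hf_anti : AntitoneOn f (Set.Ici 0))
    (hf_deriv : ∀ x, 0 ≤ x → deriv f x ≤ 0)
    (hf_int : Integrable f)
    (g' : ℝ → ℝ) (hg' : Monotone g')
    (hconv' : ∀ x : ℝ, Integrable fun y => f y * g' (x - y)) (z : ℝ) :
    MeasureTheory.IntegrableOn (fun w => deriv f w * g' (z - w)) (Set.Ioi (0:ℝ)) := by
  set ζ : ℝ → ℝ := fun w => |g' z| + (g' z - g' (z - w)) with hζdef
  have hζmono : Monotone ζ := by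
    intro a b hab
    simp only [hζdef]
    have : g' (z - b) ≤ g' (z - a) := hg' (by linarith)
    linarith
  have hζ0 : 0 ≤ ζ 0 := by simp [hζdef, abs_nonneg]
  have hint : Integrable fun w => f w * ζ (w + 2) := by
    have he : (fun w => f w * ζ (w + 2))
        = fun w => f w * (|g' z| + g' z) - f w * g' ((z - 2) - w) := by
      funext w
      have : z - (w + 2) = (z - 2) - w := by ring
      simp only [hζdef, this]
      ring
    rw [he]
    exact (hf_int.mul_const _).sub (hconv' (z - 2))
  constructor
  · exact ((hD_cont.measurable.mul
      ((hg'.measurable).comp (measurable_const_sub z))).aestronglyMeasurable).restrict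
  · have hb := blocks_lemma f hf_nonneg hf_diff hD_cont hf_anti hf_deriv ζ hζmono hζ0 hint
    refine lt_of_le_of_lt ?_ hb
    apply MeasureTheory.lintegral_mono_ae
    filter_upwards [ae_restrict_mem measurableSet_Ioi] with w hw
    have hDw : deriv f w ≤ 0 := hf_deriv w (le_of_lt hw)
    rw [Real.enorm_eq_ofReal_abs, abs_mul, abs_of_nonpos hDw]
    apply ENNReal.ofReal_le_ofReal
    apply mul_le_mul_of_nonneg_left _ (by linarith)
    show |g' (z - w)| ≤ |g' z| + (g' z - g' (z - w))
    have hmono : g' (z - w) ≤ g' z := hg' (by linarith [Set.mem_Ioi.mp hw])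
    have h1 := le_abs_self (g' z)
    have h2 := neg_abs_le (g' z)
    rw [abs_le]
    constructor <;> linarith

lemma lemA (f : ℝ → ℝ) (hf_nonneg : ∀ x, 0 ≤ f x)
    (hf_diff : Differentiable ℝ f) (hD_cont : Continuous (deriv f))
    (hf_anti : AntitoneOn f (Set.Ici 0))
    (hf_deriv : ∀ x, 0 ≤ x → deriv f x ≤ 0)
    (hf_int : Integrable f)
    (hf_even : ∀ x, f (-x) = f x)
    (hD_odd : ∀ x : ℝ, deriv f (-x) = -deriv f x)
    (g : ℝ → ℝ) (hg : Monotone g)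
    (hconv : ∀ x : ℝ, Integrable fun y => f y * g (x - y)) (z : ℝ) :
    Integrable (fun w => deriv f w * g (z - w)) := by
  have hconv2 : ∀ x : ℝ, Integrable fun y => f y * g (x + y) := by
    intro x
    have h := (hconv x).comp_neg
    have e : (fun y => f (-y) * g (x - -y)) = fun y => f y * g (x + y) := by
      funext y
      rw [hf_even, sub_neg_eq_add]
    rwa [e] at h
  have hIoi : MeasureTheory.IntegrableOn (fun w => deriv f w * g (z - w)) (Set.Ioi (0:ℝ)) :=
    lemA1 f hf_nonneg hf_diff hD_cont hf_anti hf_deriv hf_int g hg hconv z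
  have hg' : Monotone (fun u : ℝ => -g (-u)) :=
    fun a b hab => neg_le_neg (hg (neg_le_neg hab))
  have hconv' : ∀ x : ℝ, Integrable fun y => f y * (fun u : ℝ => -g (-u)) (x - y) := by
    intro x
    refine ((hconv2 (-x)).neg).congr (Filter.Eventually.of_forall fun y => ?_)
    simp only [Pi.neg_apply]
    rw [neg_sub, neg_add_eq_sub]
    ring
  have hIoi2 := (lemA1 f hf_nonneg hf_diff hD_cont hf_anti hf_deriv hf_int
    (fun u : ℝ => -g (-u)) hg' hconv' (-z)).neg
  have hIoi2' : MeasureTheory.IntegrableOn (fun w => deriv f w * g (z + w)) (Set.Ioi (0:ℝ)) := by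
    refine hIoi2.congr (Filter.Eventually.of_forall fun w => ?_)
    simp only [Pi.neg_apply, neg_sub, neg_neg]
    ring_nf
  have hIio : MeasureTheory.IntegrableOn (fun w => deriv f w * g (z - w)) (Set.Iio (0:ℝ)) := by
    apply integrableOn_Iio_of_neg
    refine (hIoi2'.neg).congr (Filter.Eventually.of_forall fun w => ?_)
    simp only [Pi.neg_apply]
    rw [hD_odd, sub_neg_eq_add]
    ring
  have hunion := hIio.union hIoi
  rw [Set.Iio_union_Ioi] at hunion
  have hres : volume.restrict ({(0:ℝ)}ᶜ) = volume := by
    rw [Measure.restrict_congr_set (MeasureTheory.ae_eq_univ.mpr (by simp)),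
      Measure.restrict_univ]
  rwa [MeasureTheory.IntegrableOn, hres] at hunion

/-- Let `f : ℝ → ℝ` be a non-negative, not identically zero, smooth,
integrable, even function with `f' ≤ 0` on `[0, ∞)`. Then for every (strictly) increasing
`g : ℝ → ℝ`, the convolution `f * g` (assumed well-defined) is strictly increasing and its
derivative is positive everywhere. -/
theorem stmt0 (f g : ℝ → ℝ)
    (hf_nonneg : ∀ x, 0 ≤ f x)
    (hf_ne : ∃ x, f x ≠ 0)
    (hf_smooth : ContDiff ℝ (⊤ : ℕ∞) f)
    (hf_int : Integrable f)
    (hf_even : ∀ x, f (-x) = f x)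
    (hf_deriv : ∀ x, 0 ≤ x → deriv f x ≤ 0)
    (hg : StrictMono g)
    (hconv : ∀ x : ℝ, Integrable (fun y => f y * g (x - y))) :
    StrictMono (fun x => ∫ y, f y * g (x - y)) ∧
      ∀ x, 0 < deriv (fun x => ∫ y, f y * g (x - y)) x := by
  classical
  have hf_cont : Continuous f := hf_smooth.continuous
  have hf_diff : Differentiable ℝ f := hf_smooth.differentiable (by simp)
  have hD_cont : Continuous (deriv f) := hf_smooth.continuous_deriv (by simp)
  have hD_odd : ∀ x : ℝ, deriv f (-x) = -deriv f x := by
    intro x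
    have e : (fun y : ℝ => f (-y)) = f := funext hf_even
    have h : deriv (fun y : ℝ => f (-y)) x = -deriv f (-x) := deriv_comp_neg f x
    rw [e] at h
    linarith
  have hf_anti : AntitoneOn f (Set.Ici 0) := by
    apply antitoneOn_of_deriv_nonpos (convex_Ici 0) hf_cont.continuousOn
    · intro x _
      exact (hf_diff x).differentiableWithinAt
    · intro x hx
      rw [interior_Ici] at hx
      exact hf_deriv x (le_of_lt hx)
  have hg_mono : Monotone g := hg.monotone
  have hg_meas : Measurable g := hg_mono.measurable
  have hA : ∀ z : ℝ, Integrable (fun w => deriv f w * g (z - w)) := fun z =>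
    lemA f hf_nonneg hf_diff hD_cont hf_anti hf_deriv hf_int hf_even hD_odd g hg_mono hconv z
  set ψ : ℝ → ℝ := fun x => ∫ w, deriv f w * g (x - w) with hψdef
  -- continuity of ψ
  have hψ_cont : Continuous ψ := by
    rw [continuous_iff_continuousAt]
    intro x₀
    have hbound_int : Integrable
        (fun w => |deriv f w| * (|g (x₀ - 1 - w)| + |g (x₀ + 1 - w)|)) := by
      refine ((hA (x₀ - 1)).norm.add (hA (x₀ + 1)).norm).congr
        (Filter.Eventually.of_forall fun w => ?_)
      simp only [Pi.add_apply, Real.norm_eq_abs, abs_mul]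
      ring
    have hae_cont : ∀ᵐ w : ℝ, ContinuousAt g (x₀ - w) := by
      have hcount : Set.Countable {t : ℝ | ¬ ContinuousAt g t} :=
        hg_mono.countable_not_continuousAt
      have himg : Set.Countable {w : ℝ | ¬ ContinuousAt g (x₀ - w)} := by
        have : {w : ℝ | ¬ ContinuousAt g (x₀ - w)}
            = (fun t => x₀ - t) '' {t : ℝ | ¬ ContinuousAt g t} := by
          ext w
          constructor
          · intro hw
            exact ⟨x₀ - w, hw, by ring⟩
          · rintro ⟨t, ht, rfl⟩
            simpa using ht
        rw [this]
        exact hcount.image _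
      have := himg.ae_notMem volume
      filter_upwards [this] with w hw
      simpa using hw
    apply MeasureTheory.continuousAt_of_dominated
      (bound := fun w => |deriv f w| * (|g (x₀ - 1 - w)| + |g (x₀ + 1 - w)|))
    · filter_upwards with x
      exact (hD_cont.measurable.mul
        (hg_meas.comp (measurable_const_sub x))).aestronglyMeasurable
    · filter_upwards [Icc_mem_nhds (by linarith : x₀ - 1 < x₀) (by linarith : x₀ < x₀ + 1)]
        with x hx
      filter_upwards with w
      rw [Real.norm_eq_abs, abs_mul]
      apply mul_le_mul_of_nonneg_left _ (abs_nonneg _)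
      have h1 : g (x₀ - 1 - w) ≤ g (x - w) := hg_mono (by linarith [hx.1])
      have h2 : g (x - w) ≤ g (x₀ + 1 - w) := hg_mono (by linarith [hx.2])
      have h3 := le_abs_self (g (x₀ + 1 - w))
      have h4 := neg_abs_le (g (x₀ - 1 - w))
      have h5 := abs_nonneg (g (x₀ - 1 - w))
      have h6 := abs_nonneg (g (x₀ + 1 - w))
      rw [abs_le]
      constructor <;> linarith
    · exact hbound_int
    · filter_upwards [hae_cont] with w hw
      have hsub : ContinuousAt (fun x : ℝ => x - w) x₀ := (continuous_sub_right w).continuousAt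
      exact continuousAt_const.mul (ContinuousAt.comp hw hsub)
  -- positivity of ψ
  have hψ_pos : ∀ x, 0 < ψ x := by
    have hf0 : 0 < f 0 := by
      obtain ⟨x₀, hx₀⟩ := hf_ne
      have hpos : 0 < f x₀ := (hf_nonneg x₀).lt_of_ne (Ne.symm hx₀)
      have habs : f |x₀| = f x₀ := by
        rcases abs_cases x₀ with ⟨h1, _⟩ | ⟨h1, _⟩
        · rw [h1]
        · rw [h1, hf_even]
      have h2 : f |x₀| ≤ f 0 :=
        hf_anti (Set.mem_Ici.mpr le_rfl) (Set.mem_Ici.mpr (abs_nonneg x₀)) (abs_nonneg x₀)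
      linarith
    obtain ⟨R, hR, hfR⟩ : ∃ R : ℝ, 0 < R ∧ f R < f 0 := by
      by_contra hcon
      push_neg at hcon
      have heq : Set.EqOn f (fun _ => f 0) (Set.Ioi 0) := by
        intro w hw
        have h1 : f w ≤ f 0 := hf_anti (Set.mem_Ici.mpr le_rfl)
          (Set.mem_Ici.mpr (le_of_lt hw)) (le_of_lt hw)
        exact le_antisymm h1 (hcon w hw)
      have hic := (hf_int.integrableOn (s := Set.Ioi 0)).congr_fun heq measurableSet_Ioi
      rw [MeasureTheory.integrableOn_const_iff] at hic
      rcases hic with h' | h'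
      · exact absurd h' (by simpa using hf0.ne')
      · rw [Real.volume_Ioi] at h'
        exact absurd h' (by simp)
    obtain ⟨δ, hδpos, hδ⟩ := Metric.continuousAt_iff.mp hf_cont.continuousAt
      (f 0 - f R) (by linarith)
    set ε := min (δ / 2) (R / 2) with hεdef
    have hε : 0 < ε := lt_min (by linarith) (by linarith)
    have hεR : ε < R := (min_le_right _ _).trans_lt (by linarith)
    have hfε : f R < f ε := by
      have hdd : dist ε 0 < δ := by
        rw [Real.dist_eq, sub_zero, abs_of_pos hε]
        calc ε ≤ δ / 2 := min_le_left _ _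
          _ < δ := by linarith
      have hh := hδ hdd
      rw [Real.dist_eq] at hh
      have := (abs_lt.mp hh).1
      linarith
    intro x
    have hFIoi : MeasureTheory.IntegrableOn (fun w => deriv f w * g (x - w))
        (Set.Ioi (0:ℝ)) := (hA x).integrableOn
    have hFIio : MeasureTheory.IntegrableOn (fun w => deriv f w * g (x - w))
        (Set.Iio (0:ℝ)) := (hA x).integrableOn
    have hGIoi : MeasureTheory.IntegrableOn (fun w => -deriv f w * g (x + w))
        (Set.Ioi (0:ℝ)) := by
      apply integrableOn_Ioi_of_neg'
      refine hFIio.congr (Filter.Eventually.of_forall fun w => ?_)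
      show deriv f w * g (x - w) = -deriv f (-w) * g (x + -w)
      rw [hD_odd, neg_neg, ← sub_eq_add_neg]
    have hsum : MeasureTheory.IntegrableOn
        (fun w => -deriv f w * (g (x + w) - g (x - w))) (Set.Ioi (0:ℝ)) := by
      refine (hGIoi.add hFIoi).congr (Filter.Eventually.of_forall fun w => ?_)
      show -deriv f w * g (x + w) + deriv f w * g (x - w)
          = -deriv f w * (g (x + w) - g (x - w))
      ring
    have hres2 : Set.univ =ᵐ[volume] ({(0:ℝ)}ᶜ : Set ℝ) :=
      (MeasureTheory.ae_eq_univ.mpr (by simp)).symm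
    have e1 : ψ x = (∫ w in Set.Iio (0:ℝ), deriv f w * g (x - w))
        + ∫ w in Set.Ioi (0:ℝ), deriv f w * g (x - w) := by
      calc ψ x = ∫ w in Set.univ, deriv f w * g (x - w) := by
            rw [MeasureTheory.setIntegral_univ]
        _ = ∫ w in ({(0:ℝ)}ᶜ : Set ℝ), deriv f w * g (x - w) :=
            MeasureTheory.setIntegral_congr_set hres2
        _ = ∫ w in Set.Iio (0:ℝ) ∪ Set.Ioi (0:ℝ), deriv f w * g (x - w) := by
            rw [Set.Iio_union_Ioi]
        _ = _ := MeasureTheory.setIntegral_union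
            ((Set.Iio_disjoint_Ici le_rfl).mono_right Set.Ioi_subset_Ici_self)
            measurableSet_Ioi hFIio hFIoi
    have e2 : ∫ w in Set.Iio (0:ℝ), deriv f w * g (x - w)
        = ∫ w in Set.Ioi (0:ℝ), -deriv f w * g (x + w) := by
      rw [setIntegral_Iio_neg]
      congr 1
      funext w
      rw [hD_odd, sub_neg_eq_add]
    have e3 : ψ x = ∫ w in Set.Ioi (0:ℝ), -deriv f w * (g (x + w) - g (x - w)) := by
      rw [e1, e2, ← MeasureTheory.integral_add hGIoi hFIoi]
      congr 1
      funext w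
      ring
    have hq0 : 0 ≤ᵐ[volume.restrict (Set.Ioi (0:ℝ))]
        fun w => -deriv f w * (g (x + w) - g (x - w)) := by
      filter_upwards [ae_restrict_mem measurableSet_Ioi] with w hw
      have h1 : deriv f w ≤ 0 := hf_deriv w (le_of_lt hw)
      have h2 : g (x - w) ≤ g (x + w) := hg_mono (by linarith [Set.mem_Ioi.mp hw])
      exact mul_nonneg (by linarith) (by linarith)
    have hs1 : ∫ w in Set.Ioc ε R, -deriv f w * (g (x + w) - g (x - w)) ≤ ψ x := by
      rw [e3]
      exact MeasureTheory.setIntegral_mono_set hsum hq0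
        (HasSubset.Subset.eventuallyLE fun w hw => Set.mem_Ioi.mpr (hε.trans hw.1))
    set c := g (x + ε) - g (x - ε) with hc
    have hcpos : 0 < c := sub_pos.mpr (hg (by linarith))
    have hs2 : ∫ w in Set.Ioc ε R, (-deriv f w) * c
        ≤ ∫ w in Set.Ioc ε R, -deriv f w * (g (x + w) - g (x - w)) := by
      apply MeasureTheory.setIntegral_mono_on
        ((hD_cont.neg.mul continuous_const).integrableOn_Ioc)
        (hsum.mono_set fun w hw => Set.mem_Ioi.mpr (hε.trans hw.1))
        measurableSet_Ioc
      intro w hw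
      have h1 : deriv f w ≤ 0 := hf_deriv w (le_of_lt (hε.trans hw.1))
      have h2 : g (x + ε) ≤ g (x + w) := hg_mono (by linarith [hw.1])
      have h3 : g (x - w) ≤ g (x - ε) := hg_mono (by linarith [hw.1])
      show -deriv f w * c ≤ -deriv f w * (g (x + w) - g (x - w))
      apply mul_le_mul_of_nonneg_left _ (by linarith)
      rw [hc]
      linarith
    have hs3 : ∫ w in Set.Ioc ε R, (-deriv f w) * c = (f ε - f R) * c := by
      rw [MeasureTheory.integral_mul_const, ← intervalIntegral.integral_of_le (le_of_lt hεR),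
        intervalIntegral.integral_neg, intervalIntegral.integral_deriv_eq_sub
          (fun y _ => hf_diff y) (hD_cont.intervalIntegrable ε R)]
      ring
    have hfin : 0 < (f ε - f R) * c := mul_pos (by linarith) hcpos
    linarith
  -- the key identity
  set h : ℝ → ℝ := fun x => ∫ y, f y * g (x - y) with hhdef
  have hkey : ∀ a b : ℝ, a ≤ b → h b - h a = ∫ s in Set.Ioc a b, ψ s := by
    intro a b hab
    have hflip : ∀ x : ℝ, Integrable (fun u => f (x - u) * g u) := by
      intro x
      refine ((hconv x).comp_sub_left x).congr (Filter.Eventually.of_forall fun u => ?_)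
      simp [sub_sub_cancel]
    have hrep : ∀ x : ℝ, h x = ∫ u, f (x - u) * g u := by
      intro x
      have hi := MeasureTheory.integral_sub_left_eq_self (fun u => f (x - u) * g u) volume x
      rw [← hi]
      show (∫ y, f y * g (x - y)) = _
      congr 1
      funext y
      simp [sub_sub_cancel]
    have hK_meas : Measurable (fun p : ℝ × ℝ => deriv f (p.2 - p.1) * g p.1) :=
      (hD_cont.measurable.comp (measurable_snd.sub measurable_fst)).mul
        (hg_meas.comp measurable_fst)
    have hC_int : Integrable (fun w => |deriv f w| * (|g (a - w)| + |g (b - w)|)) := by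
      refine ((hA a).norm.add (hA b).norm).congr (Filter.Eventually.of_forall fun w => ?_)
      simp only [Pi.add_apply, Real.norm_eq_abs, abs_mul]
      ring
    set ν := (volume : Measure ℝ).restrict (Set.Ioc a b) with hν
    have hFint : Integrable (fun p : ℝ × ℝ => deriv f (p.2 - p.1) * g p.1)
        ((volume : Measure ℝ).prod ν) := by
      rw [MeasureTheory.integrable_prod_iff' hK_meas.aestronglyMeasurable]
      constructor
      · filter_upwards with s
        refine ((hA s).comp_sub_left s).congr (Filter.Eventually.of_forall fun u => ?_)
        simp [sub_sub_cancel]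
      · apply MeasureTheory.Integrable.mono'
          (g := fun _ : ℝ => ∫ w, |deriv f w| * (|g (a - w)| + |g (b - w)|))
          ((MeasureTheory.integrableOn_const_iff).mpr (Or.inr measure_Ioc_lt_top))
        · exact ((hK_meas.norm.stronglyMeasurable).integral_prod_left').aestronglyMeasurable
        · filter_upwards [MeasureTheory.ae_restrict_mem measurableSet_Ioc] with s hs
          have h1 : Integrable (fun u => deriv f (s - u) * g u) := by
            refine ((hA s).comp_sub_left s).congr (Filter.Eventually.of_forall fun u => ?_)
            simp [sub_sub_cancel]
          have hshift : (∫ u, ‖deriv f (s - u) * g u‖)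
              = ∫ w, ‖deriv f w * g (s - w)‖ := by
            have hi := MeasureTheory.integral_sub_left_eq_self
              (fun w => ‖deriv f w * g (s - w)‖) volume s
            rw [← hi]
            congr 1
            funext u
            simp [sub_sub_cancel]
          rw [Real.norm_eq_abs, abs_of_nonneg (MeasureTheory.integral_nonneg
            fun u => norm_nonneg _), hshift]
          apply MeasureTheory.integral_mono (hA s).norm hC_int
          intro w
          show ‖deriv f w * g (s - w)‖ ≤ |deriv f w| * (|g (a - w)| + |g (b - w)|)
          rw [Real.norm_eq_abs, abs_mul]
          apply mul_le_mul_of_nonneg_left _ (abs_nonneg _)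
          have h2 : g (a - w) ≤ g (s - w) := hg_mono (by linarith [hs.1])
          have h3 : g (s - w) ≤ g (b - w) := hg_mono (by linarith [hs.2])
          have h4 := le_abs_self (g (b - w))
          have h5 := neg_abs_le (g (a - w))
          have h6 := abs_nonneg (g (a - w))
          have h7 := abs_nonneg (g (b - w))
          rw [abs_le]
          constructor <;> linarith
    have hFTCu : ∀ u : ℝ, (∫ s in a..b, deriv f (s - u)) = f (b - u) - f (a - u) := by
      intro u
      rw [intervalIntegral.integral_comp_sub_right (fun s => deriv f s) u,
        intervalIntegral.integral_deriv_eq_sub (fun y _ => hf_diff y)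
          (hD_cont.intervalIntegrable _ _)]
    calc h b - h a = (∫ u, f (b - u) * g u) - ∫ u, f (a - u) * g u := by
          rw [hrep, hrep]
      _ = ∫ u, (f (b - u) * g u - f (a - u) * g u) :=
          (MeasureTheory.integral_sub (hflip b) (hflip a)).symm
      _ = ∫ u, ∫ s in Set.Ioc a b, deriv f (s - u) * g u := by
          congr 1
          funext u
          rw [MeasureTheory.integral_mul_const, ← intervalIntegral.integral_of_le hab,
            hFTCu u]
          ring
      _ = ∫ s in Set.Ioc a b, ∫ u, deriv f (s - u) * g u :=
          MeasureTheory.integral_integral_swap hFint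
      _ = ∫ s in Set.Ioc a b, ψ s := by
          apply MeasureTheory.setIntegral_congr_fun measurableSet_Ioc
          intro s _
          have hi := MeasureTheory.integral_sub_left_eq_self
            (fun w => deriv f w * g (s - w)) volume s
          show (∫ u, deriv f (s - u) * g u) = ∫ w, deriv f w * g (s - w)
          rw [← hi]
          congr 1
          funext u
          simp [sub_sub_cancel]
  have hkey2 : ∀ x : ℝ, h x = h 0 + ∫ t in (0:ℝ)..x, ψ t := by
    intro x
    rcases le_total 0 x with hx | hx
    · rw [intervalIntegral.integral_of_le hx, ← hkey 0 x hx]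
      ring
    · rw [intervalIntegral.integral_symm, intervalIntegral.integral_of_le hx, ← hkey x 0 hx]
      ring
  have hderiv : ∀ x, HasDerivAt h (ψ x) x := by
    intro x
    have H := ((hψ_cont.integral_hasStrictDerivAt 0 x).hasDerivAt).const_add (h 0)
    apply H.congr_of_eventuallyEq
    filter_upwards with u
    exact hkey2 u
  have hdpos : ∀ x, 0 < deriv h x := by
    intro x
    rw [(hderiv x).deriv]
    exact hψ_pos x
  exact ⟨strictMono_of_deriv_pos hdpos, hdpos⟩
end

section
/- Let f, g : ℝ → ℝ be lifts of orientation-preserving circle homeomorphisms (so f(x+1) = f(x)+1 and g(x+1) = g(x)+1). Suppose g is conjugated to the translation t_α : x ↦ x + α by a homeomorphism h that is a lift of an orientation-preserving circle homeomorphism, where both h and h⁻¹ are K-Lipschitz. If there exists d > 0 with f < g + d pointwise, then the rotation number of f satisfies ρ(f) ≤ ρ(g) + K·d. -/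
/-!
Conjugating by `h` turns `g` into the translation by `α`, and since `h` is monotone and
`K`-Lipschitz, `f < g + d` becomes `h ∘ f ≤ h + (α + K d)`. Iterating, `h (fⁿ 0)` grows by at
most `n (α + K d)` while `h (gⁿ 0)` grows by exactly `n α`. As a monotone degree-one lift,
`h` keeps `h x - h 0` within `1` of `x`, so these bounds transfer to `fⁿ 0` and `gⁿ 0` up to an
additive constant, which disappears after dividing by `n`.
-/

open Filter

namespace CircleDeg1Lift

theorem lt_add_one_of_map_le_map_zero_add (H : CircleDeg1Lift) {x c : ℝ}
    (hx : H x ≤ H 0 + c) : x < c + 1 := by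
  have hfloor : (⌊x⌋ : ℝ) ≤ c := by linarith [H.le_map_of_map_zero x]
  linarith [Int.lt_floor_add_one x]

theorem sub_one_lt_of_map_zero_add_le_map (H : CircleDeg1Lift) {x c : ℝ}
    (hx : H 0 + c ≤ H x) : c - 1 < x := by
  have hceil : c ≤ (⌈x⌉ : ℝ) := by linarith [H.map_le_of_map_zero x]
  linarith [Int.ceil_lt_add_one x]

end CircleDeg1Lift

theorem iterate_map_le_add_mul {β : Type*} {φ : β → ℝ} {F : β → β} {c : ℝ}
    (hF : ∀ y, φ (F y) ≤ φ y + c) (y : β) (n : ℕ) : φ (F^[n] y) ≤ φ y + n * c := by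
  induction n with
  | zero => simp
  | succ n ih =>
    rw [Function.iterate_succ_apply']
    push_cast
    linarith [hF (F^[n] y)]

theorem le_of_tendsto_div_of_le_mul_add {x : ℕ → ℝ} {ρ c C : ℝ}
    (hx : Tendsto (fun n : ℕ => x n / n) atTop (nhds ρ)) (hle : ∀ n : ℕ, x n ≤ n * c + C) :
    ρ ≤ c := by
  have hlim : Tendsto (fun n : ℕ => c + C / n) atTop (nhds c) := by
    simpa using tendsto_const_nhds.add (tendsto_const_div_atTop_nhds_zero_nat C)
  refine le_of_tendsto_of_tendsto hx hlim ?_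
  filter_upwards [eventually_gt_atTop 0] with n hn
  have hn' : (0 : ℝ) < n := by exact_mod_cast hn
  calc x n / n ≤ (n * c + C) / n := by gcongr; exact hle n
    _ = c + C / n := by field_simp

theorem le_of_tendsto_div_of_mul_sub_le {x : ℕ → ℝ} {ρ c C : ℝ}
    (hx : Tendsto (fun n : ℕ => x n / n) atTop (nhds ρ)) (hle : ∀ n : ℕ, n * c - C ≤ x n) :
    c ≤ ρ := by
  have hneg : Tendsto (fun n : ℕ => -x n / n) atTop (nhds (-ρ)) := by
    simpa [neg_div] using hx.neg
  have := le_of_tendsto_div_of_le_mul_add (c := -c) (C := C) hneg fun n => by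
    linarith [hle n]
  linarith

theorem stmt1_general (f g h hinv : ℝ → ℝ) (α K d ρf ρg : ℝ)
    (hd : 0 < d)
    (hh_mono : StrictMono h)
    (hh_lift : ∀ x, h (x + 1) = h x + 1)
    (hh_linv : Function.LeftInverse hinv h)
    (hh_lip : ∀ x y, |h x - h y| ≤ K * |x - y|)
    (hconj : ∀ x, h (g (hinv x)) = x + α)
    (hρf : Tendsto (fun n : ℕ => f^[n] 0 / n) atTop (nhds ρf))
    (hρg : Tendsto (fun n : ℕ => g^[n] 0 / n) atTop (nhds ρg))
    (hlt : ∀ x, f x < g x + d) :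
    ρf ≤ ρg + K * d := by
  let H : CircleDeg1Lift := ⟨⟨h, hh_mono.monotone⟩, hh_lift⟩
  have hsemi : Function.Semiconj h g (· + α) := fun y => by
    simpa only [hh_linv y] using hconj (h y)
  have hstep : ∀ y, h (f y) ≤ h y + (α + K * d) := fun y => by
    have hlip := hh_lip (g y + d) (g y)
    rw [add_sub_cancel_left, abs_of_pos hd] at hlip
    linarith [hh_mono.monotone (hlt y).le, le_abs_self (h (g y + d) - h (g y)), hsemi y]
  have hα : α ≤ ρg := le_of_tendsto_div_of_mul_sub_le (C := 1) hρg fun n => by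
    have horbit : h (g^[n] 0) = h 0 + n * α := by
      rw [(hsemi.iterate_right n) 0, add_right_iterate_apply, nsmul_eq_mul]
    exact (H.sub_one_lt_of_map_zero_add_le_map horbit.ge).le
  have hf : ρf ≤ α + K * d := le_of_tendsto_div_of_le_mul_add (C := 1) hρf fun n =>
    (H.lt_add_one_of_map_le_map_zero_add (iterate_map_le_add_mul hstep 0 n)).le
  linarith

/-- rotation number comparison, upper bound. `f, g` are lifts of
orientation-preserving circle homeomorphisms, `g` is conjugated to the translation
`x ↦ x + α` by a lift `h` of an orientation-preserving circle homeomorphism such that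
`h` and its inverse `hinv` are `K`-Lipschitz. If `f < g + d` pointwise with `d > 0`,
then `ρ(f) ≤ ρ(g) + K·d`, where rotation numbers are the limits `ρ(F) = lim Fⁿ(0)/n`. -/
theorem stmt1 (f g h hinv : ℝ → ℝ) (α K d ρf ρg : ℝ)
    (hK : 1 ≤ K) (hd : 0 < d)
    (hf_cont : Continuous f) (hf_mono : StrictMono f)
    (hf_lift : ∀ x, f (x + 1) = f x + 1)
    (hg_cont : Continuous g) (hg_mono : StrictMono g)
    (hg_lift : ∀ x, g (x + 1) = g x + 1)
    (hh_mono : StrictMono h)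
    (hh_lift : ∀ x, h (x + 1) = h x + 1)
    (hh_linv : Function.LeftInverse hinv h)
    (hh_rinv : Function.RightInverse hinv h)
    (hh_lip : ∀ x y, |h x - h y| ≤ K * |x - y|)
    (hhinv_lip : ∀ x y, |hinv x - hinv y| ≤ K * |x - y|)
    (hconj : ∀ x, h (g (hinv x)) = x + α)
    (hρf : Tendsto (fun n : ℕ => f^[n] 0 / n) atTop (nhds ρf))
    (hρg : Tendsto (fun n : ℕ => g^[n] 0 / n) atTop (nhds ρg))
    (hlt : ∀ x, f x < g x + d) :
    ρf ≤ ρg + K * d :=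
  stmt1_general f g h hinv α K d ρf ρg hd hh_mono hh_lift hh_linv hh_lip hconj hρf hρg hlt
end

section
/- Let f, g : ℝ → ℝ be lifts of orientation-preserving circle homeomorphisms. Suppose g is conjugated to the translation t_α by a homeomorphism h that is a lift of an orientation-preserving circle homeomorphism, with h and h⁻¹ both K-Lipschitz. If there exists d > 0 with f + d < g pointwise, then ρ(f) + d/K ≤ ρ(g). -/
open Filter

/-- rotation number comparison, lower bound. With the same setting as
Statement 1, if `f + d < g` pointwise with `d > 0`, then `ρ(f) + d/K ≤ ρ(g)`. -/
theorem stmt2 (f g h hinv : ℝ → ℝ) (α K d ρf ρg : ℝ)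
    (hK : 1 ≤ K) (hd : 0 < d)
    (hf_cont : Continuous f) (hf_mono : StrictMono f)
    (hf_lift : ∀ x, f (x + 1) = f x + 1)
    (hg_cont : Continuous g) (hg_mono : StrictMono g)
    (hg_lift : ∀ x, g (x + 1) = g x + 1)
    (hh_mono : StrictMono h)
    (hh_lift : ∀ x, h (x + 1) = h x + 1)
    (hh_linv : Function.LeftInverse hinv h)
    (hh_rinv : Function.RightInverse hinv h)
    (hh_lip : ∀ x y, |h x - h y| ≤ K * |x - y|)
    (hhinv_lip : ∀ x y, |hinv x - hinv y| ≤ K * |x - y|)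
    (hconj : ∀ x, h (g (hinv x)) = x + α)
    (hρf : Tendsto (fun n : ℕ => f^[n] 0 / n) atTop (nhds ρf))
    (hρg : Tendsto (fun n : ℕ => g^[n] 0 / n) atTop (nhds ρg))
    (hlt : ∀ x, f x + d < g x) :
    ρf + d / K ≤ ρg := by
  have hK0 : (0:ℝ) < K := lt_of_lt_of_le one_pos hK
  -- hinv is monotone and a degree-1 lift
  have hinv_mono : Monotone hinv := by
    intro x y hxy
    by_contra hc
    push_neg at hc
    have := hh_mono hc
    rw [hh_rinv, hh_rinv] at this
    exact absurd this (not_lt.2 hxy)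
  have hinv_lift : ∀ x, hinv (x + 1) = hinv x + 1 := by
    intro x
    apply hh_mono.injective
    rw [hh_rinv, hh_lift, hh_rinv]
  -- package as CircleDeg1Lift
  let F : CircleDeg1Lift := ⟨⟨f, hf_mono.monotone⟩, hf_lift⟩
  let G : CircleDeg1Lift := ⟨⟨g, hg_mono.monotone⟩, hg_lift⟩
  let H : CircleDeg1Lift := ⟨⟨h, hh_mono.monotone⟩, hh_lift⟩
  let Hinv : CircleDeg1Lift := ⟨⟨hinv, hinv_mono⟩, hinv_lift⟩
  let U : CircleDeg1Liftˣ :=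
    { val := H
      inv := Hinv
      val_inv := by ext x; exact hh_rinv x
      inv_val := by ext x; exact hh_linv x }
  have hF : F.translationNumber = ρf := F.translationNumber_eq_of_tendsto₀ hρf
  have hG : G.translationNumber = ρg := G.translationNumber_eq_of_tendsto₀ hρg
  -- ρg = α
  have hGconj : ∀ x, ((U : CircleDeg1Lift) * G * ((U⁻¹ : CircleDeg1Liftˣ) : CircleDeg1Lift)) x
      = x + α := by
    intro x
    exact hconj x
  have hGα : G.translationNumber = α := by
    rw [← CircleDeg1Lift.translationNumber_conj_eq U G]
    refine le_antisymm ?_ ?_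
    · exact CircleDeg1Lift.translationNumber_le_of_le_add _ fun x => (hGconj x).le
    · exact CircleDeg1Lift.le_translationNumber_of_add_le _ fun x => (hGconj x).ge
  -- key pointwise bound on the conjugate of F
  have hkey : ∀ x, ((U : CircleDeg1Lift) * F * ((U⁻¹ : CircleDeg1Liftˣ) : CircleDeg1Lift)) x
      ≤ x + (α - d / K) := by
    intro x
    show h (f (hinv x)) ≤ x + (α - d / K)
    set y := hinv x with hy
    have h1 : f y ≤ g y - d := by linarith [hlt y]
    have h2 : h (f y) ≤ h (g y - d) := hh_mono.monotone h1
    have h3 : h (g y - d) ≤ h (g y) - d / K := by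
      have hmono : h (g y - d) < h (g y) := hh_mono (by linarith)
      have := hhinv_lip (h (g y)) (h (g y - d))
      rw [hh_linv, hh_linv] at this
      have habs : |g y - (g y - d)| = d := by rw [abs_of_pos (by linarith)]; ring
      rw [habs, abs_of_pos (by linarith)] at this
      have : d / K ≤ h (g y) - h (g y - d) := (div_le_iff₀' hK0).2 this
      linarith
    have h4 : h (g y) = x + α := hconj x
    calc h (f y) ≤ h (g y - d) := h2
      _ ≤ h (g y) - d / K := h3
      _ = x + (α - d / K) := by rw [h4]; ring
  have hFle : F.translationNumber ≤ α - d / K := by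
    rw [← CircleDeg1Lift.translationNumber_conj_eq U F]
    exact CircleDeg1Lift.translationNumber_le_of_le_add _ hkey
  have : ρg = α := by rw [← hG, hGα]
  rw [this]
  rw [hF] at hFle
  linarith
end

section
/- Let g be an orientation-preserving homeomorphism of the circle 𝕋 = ℝ/ℤ with rotation number ρ(g), and let μ be a non-atomic g-invariant Borel probability measure on 𝕋. Assume either ρ(g) is irrational, or g is topologically conjugate to a rotation. Then the map h : 𝕋 → 𝕋 defined by h(θ) = μ([0,θ]) (mod 1) is a continuous semi-conjugacy between g and the rotation by ρ(g): h(g(θ)) = h(θ) + ρ(g) for all θ. -/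
/-!
Lift `θ ↦ μ[0, θ)` to the degree-one map `F Θ = μ[0, fract Θ) + ⌊Θ⌋`. For `x ≤ y ≤ x + 1` the
increment `F y - F x` is the mass of the arc `[x, y)`. The homeomorphism `g` maps this arc onto
`[G x, G y)` and preserves `μ`, so `F (G x) - F x` is locally, hence globally, constant: `F`
semiconjugates `G` to a translation, whose amount must then be the translation number `ρ` of `G`.
No atoms are needed up to here; non-atomicity makes `F` continuous and lets `[0, θ)` be replaced
by `[0, θ]`.
-/

open MeasureTheory Filter Set Topology

def circleArc (a b : ℝ) : Set (AddCircle (1 : ℝ)) :=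
  ((↑) : ℝ → AddCircle (1 : ℝ)) '' Ico a b

theorem mem_circleArc_iff {a b c : ℝ} (hca : c ≤ a) (hbc : b ≤ c + 1) {θ : AddCircle (1 : ℝ)} :
    θ ∈ circleArc a b ↔ (AddCircle.equivIco 1 c θ : ℝ) ∈ Ico a b := by
  constructor
  · rintro ⟨t, ht, rfl⟩
    rwa [AddCircle.equivIco_coe_of_mem ⟨hca.trans ht.1, ht.2.trans_le hbc⟩]
  · exact fun h => ⟨_, h, AddCircle.coe_equivIco⟩

theorem circleArc_add_intCast (a b : ℝ) (n : ℤ) :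
    circleArc (a + n) (b + n) = circleArc a b := by
  rw [circleArc, ← image_add_const_Ico, ← image_comp]
  congr 1
  funext t
  simp

theorem measurableSet_circleArc (a b : ℝ) : MeasurableSet (circleArc a b) := by
  rcases le_or_gt b a with hba | hab
  · simp [circleArc, Ico_eq_empty_of_le hba]
  · rw [circleArc, ← Ioo_insert_left hab, image_insert_eq]
    exact (QuotientAddGroup.isOpenMap_coe _ isOpen_Ioo).measurableSet.insert _

theorem circleArc_zero_one : circleArc 0 1 = univ := by
  simpa [circleArc] using AddCircle.coe_image_Ico_eq (1 : ℝ) (0 : ℝ)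

theorem circleArc_union {x y z : ℝ} (hxy : x ≤ y) (hyz : y ≤ z) :
    circleArc x y ∪ circleArc y z = circleArc x z := by
  rw [circleArc, circleArc, ← image_union, Ico_union_Ico_eq_Ico hxy hyz, circleArc]

theorem disjoint_circleArc {x y z : ℝ} (hxy : x ≤ y) (hyz : y ≤ z) (hzx : z ≤ x + 1) :
    Disjoint (circleArc x y) (circleArc y z) := by
  rw [Set.disjoint_left]
  intro θ h₁ h₂
  rw [mem_circleArc_iff le_rfl (hyz.trans hzx)] at h₁
  rw [mem_circleArc_iff hxy hzx] at h₂
  exact h₁.2.not_ge h₂.1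

theorem measureReal_circleArc_add (μ : Measure (AddCircle (1 : ℝ))) [IsFiniteMeasure μ]
    {x y z : ℝ} (hxy : x ≤ y) (hyz : y ≤ z) (hzx : z ≤ x + 1) :
    μ.real (circleArc x y) + μ.real (circleArc y z) = μ.real (circleArc x z) := by
  rw [← circleArc_union hxy hyz,
    measureReal_union (disjoint_circleArc hxy hyz hzx) (measurableSet_circleArc y z)]

theorem biInter_circleArc_right_subset (x : ℝ) :
    ⋂ y > x, circleArc x y ⊆ {(x : AddCircle (1 : ℝ))} := by
  intro θ hθ
  simp only [mem_iInter] at hθ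
  set t : ℝ := (AddCircle.equivIco 1 x θ : ℝ)
  have ht : ∀ y, x < y → y ≤ x + 1 → x ≤ t ∧ t < y := fun y hxy hy =>
    (mem_circleArc_iff le_rfl hy).1 (hθ y hxy)
  have hx : t = x := by
    refine le_antisymm (le_of_forall_gt fun y hy => ?_) (ht (x + 1) (by linarith) le_rfl).1
    rcases le_or_gt y (x + 1) with hy1 | hy1
    · exact (ht y hy hy1).2
    · exact (ht (x + 1) (by linarith) le_rfl).2.trans hy1
  rw [mem_singleton_iff, ← hx]
  exact AddCircle.coe_equivIco.symm

theorem biInter_circleArc_left_eq_empty (x : ℝ) :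
    ⋂ y < x, circleArc y x = ∅ := by
  refine eq_empty_of_forall_notMem fun θ hθ => ?_
  simp only [mem_iInter] at hθ
  set t : ℝ := (AddCircle.equivIco 1 (x - 1) θ : ℝ)
  have ht : x - 1 ≤ t ∧ t < x := by
    simpa using (AddCircle.equivIco 1 (x - 1) θ).2
  have := (mem_circleArc_iff (c := x - 1) (by linarith) (by linarith)).1
    (hθ ((t + x) / 2) (by linarith))
  linarith [this.1]

theorem tendsto_measure_circleArc_nhdsGT (μ : Measure (AddCircle (1 : ℝ))) [IsFiniteMeasure μ]
    [NullSingletonClass μ] (x : ℝ) :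
    Tendsto (fun y => μ (circleArc x y)) (𝓝[>] x) (𝓝 0) := by
  have h := tendsto_measure_biInter_gt (μ := μ) (s := circleArc x) (a := x)
    (fun r _ => (measurableSet_circleArc x r).nullMeasurableSet)
    (fun i j _ hij => image_mono (Ico_subset_Ico_right hij))
    ⟨x + 1, by linarith, measure_ne_top _ _⟩
  rwa [measure_mono_null (biInter_circleArc_right_subset x) (measure_singleton _)] at h

theorem tendsto_measure_circleArc_nhdsLT (μ : Measure (AddCircle (1 : ℝ))) [IsFiniteMeasure μ]
    (x : ℝ) :
    Tendsto (fun y => μ (circleArc y x)) (𝓝[<] x) (𝓝 0) := by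
  -- On `ℝᵒᵈ`, the filter `𝓝[>]` is `𝓝[<]` on `ℝ`.
  have h := tendsto_measure_biInter_gt (μ := μ) (ι := ℝᵒᵈ)
    (s := fun r => circleArc (OrderDual.ofDual r) x) (a := OrderDual.toDual x)
    (fun r _ => (measurableSet_circleArc _ x).nullMeasurableSet)
    (fun i j _ hij => image_mono (Ico_subset_Ico_left hij))
    ⟨OrderDual.toDual (x - 1), OrderDual.toDual_lt_toDual.2 (by linarith), measure_ne_top _ _⟩
  have h0 : (⋂ r > OrderDual.toDual x, circleArc (OrderDual.ofDual r) x) = ∅ :=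
    biInter_circleArc_left_eq_empty x
  rwa [h0, measure_empty] at h

noncomputable def circleCDF (μ : Measure (AddCircle (1 : ℝ))) (Θ : ℝ) : ℝ :=
  μ.real (circleArc 0 (Int.fract Θ)) + ⌊Θ⌋

section circleCDF

variable (μ : Measure (AddCircle (1 : ℝ)))

theorem circleCDF_add_intCast (Θ : ℝ) (n : ℤ) : circleCDF μ (Θ + n) = circleCDF μ Θ + n := by
  simp only [circleCDF, Int.fract_add_intCast, Int.floor_add_intCast, Int.cast_add]
  ring

theorem circleCDF_of_mem_Ico {x : ℝ} (hx : x ∈ Ico (0 : ℝ) 1) :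
    circleCDF μ x = μ.real (circleArc 0 x) := by
  simp [circleCDF, Int.fract_eq_self.2 hx, Int.floor_eq_zero_iff.2 hx]

theorem circleCDF_eq_measureReal_image_Icc [NullSingletonClass μ] (Θ : ℝ) :
    circleCDF μ Θ =
      μ.real (((↑) : ℝ → AddCircle (1 : ℝ)) '' Icc 0 (Int.fract Θ)) + ⌊Θ⌋ := by
  rw [circleCDF, ← Ico_insert_right (Int.fract_nonneg Θ), image_insert_eq, circleArc,
    measureReal_congr (insert_ae_eq_self _ _)]

variable [IsProbabilityMeasure μ]

theorem circleCDF_sub_of_mem_Ico {x y : ℝ} (hx : x ∈ Ico (0 : ℝ) 1) (hxy : x ≤ y)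
    (hyx : y ≤ x + 1) : circleCDF μ y - circleCDF μ x = μ.real (circleArc x y) := by
  rw [circleCDF_of_mem_Ico μ hx]
  rcases lt_or_ge y 1 with hy | hy
  · rw [circleCDF_of_mem_Ico μ ⟨hx.1.trans hxy, hy⟩,
      ← measureReal_circleArc_add μ hx.1 hxy (by linarith)]
    ring
  · have hy' : circleCDF μ y = μ.real (circleArc 1 y) + 1 := by
      have h := circleCDF_add_intCast μ (y - 1) 1
      have h' := circleArc_add_intCast 0 (y - 1) 1
      simp only [Int.cast_one, sub_add_cancel, zero_add] at h h'
      rw [h, h', circleCDF_of_mem_Ico μ ⟨by linarith, by linarith [hx.2]⟩]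
    have h₁ := measureReal_circleArc_add μ hx.1 hx.2.le (by linarith)
    have h₂ := measureReal_circleArc_add μ hx.2.le hy hyx
    rw [circleArc_zero_one, probReal_univ] at h₁
    linarith

theorem circleCDF_sub {x y : ℝ} (hxy : x ≤ y) (hyx : y ≤ x + 1) :
    circleCDF μ y - circleCDF μ x = μ.real (circleArc x y) := by
  have h := circleCDF_sub_of_mem_Ico μ (x := Int.fract x) (y := y - ⌊x⌋)
    ⟨Int.fract_nonneg x, Int.fract_lt_one x⟩ (by rw [Int.fract]; linarith)
    (by rw [Int.fract]; linarith)
  calc circleCDF μ y - circleCDF μ x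
      = circleCDF μ (y - ⌊x⌋ + ⌊x⌋) - circleCDF μ (Int.fract x + ⌊x⌋) := by
        rw [sub_add_cancel, Int.fract_add_floor]
    _ = circleCDF μ (y - ⌊x⌋) - circleCDF μ (Int.fract x) := by
        rw [circleCDF_add_intCast, circleCDF_add_intCast]; ring
    _ = μ.real (circleArc x y) := by
        rw [h, ← circleArc_add_intCast _ _ ⌊x⌋, Int.fract_add_floor, sub_add_cancel]

theorem monotone_circleCDF : Monotone (circleCDF μ) := by
  intro x y hxy
  set n := ⌊y - x⌋
  have hn : (0 : ℝ) ≤ n := by exact_mod_cast Int.floor_nonneg.2 (sub_nonneg.2 hxy)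
  have h := circleCDF_sub μ (x := x) (y := y - n) (by linarith [Int.floor_le (y - x)])
    (by linarith [Int.lt_floor_add_one (y - x)])
  have hy : circleCDF μ y = circleCDF μ (y - n) + n := by
    rw [← circleCDF_add_intCast, sub_add_cancel]
  linarith [measureReal_nonneg (μ := μ) (s := circleArc x (y - n))]

noncomputable def circleCDFLift : CircleDeg1Lift where
  toFun := circleCDF μ
  monotone' := monotone_circleCDF μ
  map_add_one' Θ := by exact_mod_cast circleCDF_add_intCast μ Θ 1

variable [NullSingletonClass μ]

theorem continuous_circleCDF : Continuous (circleCDF μ) := by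
  refine continuous_iff_continuousAt.2 fun x => continuousAt_iff_continuous_left'_right'.2 ⟨?_, ?_⟩
    <;> rw [ContinuousWithinAt]
  · have h : ∀ᶠ y in 𝓝[<] x, circleCDF μ x - μ.real (circleArc y x) = circleCDF μ y := by
      filter_upwards [Ioo_mem_nhdsLT (show x - 1 < x by linarith)] with y hy
      linarith [circleCDF_sub μ hy.2.le (by linarith [hy.1])]
    have h' := ((ENNReal.tendsto_toReal ENNReal.zero_ne_top).comp
      (tendsto_measure_circleArc_nhdsLT μ x)).const_sub (circleCDF μ x)
    simpa using h'.congr' h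
  · have h : ∀ᶠ y in 𝓝[>] x, circleCDF μ x + μ.real (circleArc x y) = circleCDF μ y := by
      filter_upwards [Ioo_mem_nhdsGT (show x < x + 1 by linarith)] with y hy
      linarith [circleCDF_sub μ hy.1.le hy.2.le]
    have h' := ((ENNReal.tendsto_toReal ENNReal.zero_ne_top).comp
      (tendsto_measure_circleArc_nhdsGT μ x)).const_add (circleCDF μ x)
    simpa using h'.congr' h

end circleCDF

theorem image_circleArc {g : AddCircle (1 : ℝ) → AddCircle (1 : ℝ)} {G : ℝ → ℝ}
    (hG : StrictMono G) (hGs : Function.Surjective G) (hgG : ∀ x : ℝ, g x = G x) (a b : ℝ) :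
    g '' circleArc a b = circleArc (G a) (G b) := by
  have hIco := (hG.orderIsoOfSurjective G hGs).image_Ico a b
  rw [StrictMono.coe_orderIsoOfSurjective] at hIco
  rw [circleArc, ← image_comp, show g ∘ (↑) = ((↑) : ℝ → AddCircle (1 : ℝ)) ∘ G from funext hgG,
    image_comp, hIco, circleArc]

theorem apply_eq_apply_zero_of_forall_le_le_add_one {α : Type*} {D : ℝ → α}
    (hD : ∀ x y, x ≤ y → y ≤ x + 1 → D y = D x) (x : ℝ) : D x = D 0 := by
  have hper : Function.Periodic D 1 := fun x => hD x (x + 1) (by linarith) le_rfl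
  calc D x = D (Int.fract x) := by
        rw [← hper.sub_int_mul_eq ⌊x⌋, mul_one, Int.self_sub_floor]
    _ = D 0 := hD 0 _ (Int.fract_nonneg x) (by linarith [Int.fract_lt_one x])

theorem circleCDF_map_eq_add_translationNumber (μ : Measure (AddCircle (1 : ℝ)))
    [IsProbabilityMeasure μ] {g : AddCircle (1 : ℝ) → AddCircle (1 : ℝ)}
    (hμ : MeasurePreserving g μ μ) (hg : Function.Injective g) (f : CircleDeg1Lift)
    (hf : StrictMono f) (hfs : Function.Surjective f) (hgf : ∀ x : ℝ, g x = f x) (x : ℝ) :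
    circleCDF μ (f x) = circleCDF μ x + f.translationNumber := by
  have harc : ∀ a b, μ.real (circleArc (f a) (f b)) = μ.real (circleArc a b) := fun a b =>
    calc μ.real (circleArc (f a) (f b))
        = μ.real (g ⁻¹' circleArc (f a) (f b)) :=
          (hμ.measureReal_preimage (measurableSet_circleArc _ _).nullMeasurableSet).symm
      _ = μ.real (circleArc a b) := by rw [← image_circleArc hf hfs hgf, hg.preimage_image]
  set c := circleCDF μ (f 0) - circleCDF μ 0
  have hc : ∀ x, circleCDF μ (f x) = circleCDF μ x + c := fun x => by
    have h := apply_eq_apply_zero_of_forall_le_le_add_one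
      (D := fun y => circleCDF μ (f y) - circleCDF μ y) (fun y z hyz hzy => by
        have h₁ := circleCDF_sub μ hyz hzy
        have h₂ := circleCDF_sub μ (f.monotone hyz) (by rw [← f.map_add_one]; exact f.monotone hzy)
        rw [harc] at h₂
        linarith) x
    linarith
  have hsemi : Function.Semiconj (circleCDFLift μ) f
      (CircleDeg1Lift.translate (Multiplicative.ofAdd c) : CircleDeg1Lift) := fun x => by
    simp [circleCDFLift, hc, add_comm]
  rw [hc, CircleDeg1Lift.translationNumber_eq_of_semiconj hsemi,
    CircleDeg1Lift.translationNumber_translate]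

theorem stmt3_general (g : AddCircle (1:ℝ) → AddCircle (1:ℝ)) (G : ℝ → ℝ) (ρ : ℝ)
    (μ : Measure (AddCircle (1:ℝ)))
    [IsProbabilityMeasure μ] [NullSingletonClass μ]
    (hg_cont : Continuous g) (hg_bij : Function.Bijective g)
    (hG_cont : Continuous G) (hG_mono : StrictMono G)
    (hG_lift : ∀ x, G (x + 1) = G x + 1)
    (hproj : ∀ x : ℝ, g (x : AddCircle (1:ℝ)) = ((G x : ℝ) : AddCircle (1:ℝ)))
    (hinv : μ.map g = μ)
    (hρ : Tendsto (fun n : ℕ => G^[n] 0 / n) atTop (nhds ρ)) :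
    let H : ℝ → ℝ := fun Θ =>
      (μ ((fun t : ℝ => (t : AddCircle (1:ℝ))) '' Set.Icc 0 (Int.fract Θ))).toReal + (⌊Θ⌋ : ℝ)
    Continuous H ∧
      ∀ Θ : ℝ, ((H (G Θ) : ℝ) : AddCircle (1:ℝ)) = ((H Θ + ρ : ℝ) : AddCircle (1:ℝ)) := by
  intro H
  let f : CircleDeg1Lift := ⟨⟨G, hG_mono.monotone⟩, hG_lift⟩
  have hH : H = circleCDF μ := funext fun Θ => (circleCDF_eq_measureReal_image_Icc μ Θ).symm
  have hρf : ρ = f.translationNumber := tendsto_nhds_unique hρ <|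
    f.tendsto_translation_number₀.congr fun n => by rw [CircleDeg1Lift.coe_pow]; rfl
  have hsemi := circleCDF_map_eq_add_translationNumber μ ⟨hg_cont.measurable, hinv⟩
    hg_bij.injective f hG_mono (f.continuous_iff_surjective.1 hG_cont) hproj
  refine ⟨hH ▸ continuous_circleCDF μ, fun Θ => ?_⟩
  rw [hH, hρf]
  exact congrArg _ (hsemi Θ)

/-- Let `g` be an orientation-preserving circle homeomorphism (with lift `G`,
strictly increasing, commuting with the integer translation) with translation number `ρ`,
and `μ` a non-atomic `g`-invariant Borel probability measure on `𝕋 = ℝ/ℤ`. If `ρ` is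
irrational or `g` is topologically conjugate to a rotation, then
`h(θ) = μ([0,θ]) (mod 1)` is a continuous semi-conjugacy between `g` and the rotation by
`ρ`: `h(g θ) = h(θ) + ρ`. Here `h` is expressed through its lift
`H(Θ) = μ([0, fract Θ]) + ⌊Θ⌋`, and the semi-conjugacy identity is stated modulo 1. -/
theorem stmt3 (g : AddCircle (1:ℝ) → AddCircle (1:ℝ)) (G : ℝ → ℝ) (ρ : ℝ)
    (μ : Measure (AddCircle (1:ℝ)))
    [IsProbabilityMeasure μ] [NullSingletonClass μ]
    (hg_cont : Continuous g) (hg_bij : Function.Bijective g)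
    (hG_cont : Continuous G) (hG_mono : StrictMono G)
    (hG_lift : ∀ x, G (x + 1) = G x + 1)
    (hproj : ∀ x : ℝ, g (x : AddCircle (1:ℝ)) = ((G x : ℝ) : AddCircle (1:ℝ)))
    (hinv : μ.map g = μ)
    (hρ : Tendsto (fun n : ℕ => G^[n] 0 / n) atTop (nhds ρ))
    (hyp : Irrational ρ ∨ ∃ (e : AddCircle (1:ℝ) ≃ₜ AddCircle (1:ℝ)) (β : AddCircle (1:ℝ)),
      ∀ x, e (g x) = e x + β) :
    let H : ℝ → ℝ := fun Θ =>
      (μ ((fun t : ℝ => (t : AddCircle (1:ℝ))) '' Set.Icc 0 (Int.fract Θ))).toReal + (⌊Θ⌋ : ℝ)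
    Continuous H ∧
      ∀ Θ : ℝ, ((H (G Θ) : ℝ) : AddCircle (1:ℝ)) = ((H Θ + ρ : ℝ) : AddCircle (1:ℝ)) :=
  stmt3_general g G ρ μ hg_cont hg_bij hG_cont hG_mono hG_lift hproj hinv hρ
end

section
/- Let h : 𝕋 → 𝕋 be a continuous non-decreasing degree-one map and g an orientation-preserving circle homeomorphism satisfying h ∘ g = h + ρ for some constant ρ. Then the formula μ([0,θ]) = h(θ) − h(0) (interpreted via lifts) defines a g-invariant Borel probability measure on 𝕋. -/
/-!
The Stieltjes measure `ν` of `H` on `ℝ` is invariant under every increasing homeomorphism that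
shifts `H` by a constant: the integer translations (`H` has degree one) and `G`
(as `H ∘ G = H + ρ`).
Invariance under `ℤ` makes the push-forward to `𝕋` of `ν` restricted to a fundamental domain
`(t, t + 1]` independent of `t`; it has mass `H 1 - H 0 = 1`, and it is `g`-invariant because `G`
carries `(0, 1]` onto the fundamental domain `(G 0, G 0 + 1]`.
-/

open MeasureTheory Set

namespace StieltjesFunction

theorem measure_map_orderIso_of_comp_eq_add_const (f : StieltjesFunction ℝ) (φ : ℝ ≃o ℝ) {c : ℝ}
    (h : ∀ x, f (φ x) = f x + c) : f.measure.map φ = f.measure := by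
  refine (Measure.ext_of_Ioc _ _ fun a b _ => ?_).symm
  rw [Measure.map_apply φ.monotone.measurable measurableSet_Ioc, φ.preimage_Ioc, measure_Ioc,
    measure_Ioc]
  have ha := h (φ.symm a)
  have hb := h (φ.symm b)
  rw [φ.apply_symm_apply] at ha hb
  congr 1
  linarith

theorem vaddInvariantMeasure_zmultiples_one (f : StieltjesFunction ℝ)
    (hf : ∀ x, f (x + 1) = f x + 1) :
    VAddInvariantMeasure (AddSubgroup.op (AddSubgroup.zmultiples (1 : ℝ))) ℝ f.measure := by
  refine ⟨fun c s hs => ?_⟩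
  obtain ⟨n, hn⟩ := AddSubgroup.mem_zmultiples_iff.mp (AddSubgroup.mem_op.mp c.2)
  have hc : (fun x => c +ᵥ x) = OrderIso.addRight (n : ℝ) := funext fun x => by
    rw [AddSubgroup.vadd_def, ← AddOpposite.op_unop (c : ℝᵃᵒᵖ), op_vadd_eq_add, ← hn, zsmul_one]
    rfl
  let F : CircleDeg1Lift := ⟨⟨f, f.mono⟩, hf⟩
  rw [hc, ← Measure.map_apply (OrderIso.addRight (n : ℝ)).monotone.measurable hs,
    f.measure_map_orderIso_of_comp_eq_add_const _ (fun x => F.map_add_int x n)]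

end StieltjesFunction

namespace AddCircle

variable {T : ℝ} [Fact (0 < T)]

theorem map_restrict_Ioc_eq (μ : Measure ℝ)
    [VAddInvariantMeasure (AddSubgroup.op (AddSubgroup.zmultiples T)) ℝ μ] (s t : ℝ) :
    (μ.restrict (Ioc s (s + T))).map ((↑) : ℝ → AddCircle T) =
      (μ.restrict (Ioc t (t + T))).map ((↑) : ℝ → AddCircle T) :=
  (isAddFundamentalDomain_Ioc' Fact.out s μ).addQuotientMeasure_eq _
    (isAddFundamentalDomain_Ioc' Fact.out t μ)

theorem map_map_restrict_Ioc_eq_of_lift {μ : Measure ℝ}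
    [VAddInvariantMeasure (AddSubgroup.op (AddSubgroup.zmultiples T)) ℝ μ]
    (φ : ℝ ≃o ℝ) (hφμ : μ.map φ = μ) (hφT : φ T = φ 0 + T)
    {g : AddCircle T → AddCircle T} (hg : Measurable g) (hlift : ∀ x : ℝ, g x = φ x) :
    ((μ.restrict (Ioc 0 (0 + T))).map (↑)).map g = (μ.restrict (Ioc 0 (0 + T))).map (↑) := by
  have hpre : φ ⁻¹' Ioc (φ 0) (φ 0 + T) = Ioc 0 (0 + T) := by
    rw [← hφT, φ.preimage_Ioc, φ.symm_apply_apply, φ.symm_apply_apply, zero_add]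
  rw [Measure.map_map hg AddCircle.measurable_mk', show g ∘ (↑) = (↑) ∘ φ from funext hlift,
    ← Measure.map_map AddCircle.measurable_mk' φ.monotone.measurable]
  conv_lhs => rw [← hpre, ← Measure.restrict_map φ.monotone.measurable measurableSet_Ioc, hφμ]
  exact map_restrict_Ioc_eq μ (φ 0) 0

theorem coe_preimage_coe_image_Icc_inter_Ioc {Θ : ℝ} (hΘ : Θ ∈ Ico 0 T) :
    ((↑) : ℝ → AddCircle T) ⁻¹' (((↑) : ℝ → AddCircle T) '' Icc 0 Θ) ∩ Ioc (Θ - T) Θ =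
      Icc 0 Θ := by
  have hsub : Icc 0 Θ ⊆ Ioc (Θ - T) (Θ - T + T) := by
    rw [sub_add_cancel]
    exact Icc_subset_Ioc_iff hΘ.1 |>.mpr ⟨by linarith [hΘ.2], le_rfl⟩
  ext x
  constructor
  · rintro ⟨⟨y, hy, hyx⟩, hx⟩
    rw [coe_eq_coe_iff_of_mem_Ioc (hsub hy) (by rwa [sub_add_cancel])] at hyx
    exact hyx ▸ hy
  · intro hx
    exact ⟨mem_image_of_mem _ hx, by simpa using hsub hx⟩

end AddCircle

theorem stmt4_general (g : AddCircle (1:ℝ) → AddCircle (1:ℝ)) (G H : ℝ → ℝ) (ρ : ℝ)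
    (hg_cont : Continuous g)
    (hG_cont : Continuous G) (hG_mono : StrictMono G)
    (hG_lift : ∀ x, G (x + 1) = G x + 1)
    (hproj : ∀ x : ℝ, g (x : AddCircle (1:ℝ)) = ((G x : ℝ) : AddCircle (1:ℝ)))
    (hH_cont : Continuous H) (hH_mono : Monotone H)
    (hH_lift : ∀ x, H (x + 1) = H x + 1)
    (hsemi : ∀ x, H (G x) = H x + ρ) :
    ∃ μ : Measure (AddCircle (1:ℝ)), IsProbabilityMeasure μ ∧ μ.map g = μ ∧
      ∀ Θ ∈ Set.Ico (0:ℝ) 1,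
        (μ ((fun t : ℝ => (t : AddCircle (1:ℝ))) '' Set.Icc 0 Θ)).toReal = H Θ - H 0 := by
  have : Fact ((0 : ℝ) < 1) := ⟨one_pos⟩
  let F : StieltjesFunction ℝ := ⟨H, hH_mono, fun _ => hH_cont.continuousWithinAt⟩
  have := F.vaddInvariantMeasure_zmultiples_one hH_lift
  let φ : ℝ ≃o ℝ := hG_mono.orderIsoOfSurjective G <|
    (CircleDeg1Lift.mk ⟨G, hG_mono.monotone⟩ hG_lift).continuous_iff_surjective.mp hG_cont
  refine ⟨(F.measure.restrict (Ioc 0 (0 + 1))).map (↑), ⟨?_⟩, ?_, fun Θ hΘ => ?_⟩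
  · rw [Measure.map_apply AddCircle.measurable_mk' MeasurableSet.univ, preimage_univ,
      Measure.restrict_apply_univ, F.measure_Ioc, zero_add]
    simp [F, show H 1 = H 0 + 1 by simpa using hH_lift 0]
  · exact AddCircle.map_map_restrict_Ioc_eq_of_lift φ
      (F.measure_map_orderIso_of_comp_eq_add_const φ hsemi)
      (by simpa using hG_lift 0 : G 1 = G 0 + 1) hg_cont.measurable hproj
  · have hA : MeasurableSet (((↑) : ℝ → AddCircle (1 : ℝ)) '' Icc 0 Θ) :=
      (isCompact_Icc.image (AddCircle.continuous_mk' 1)).measurableSet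
    -- read `μ` off the fundamental domain `(Θ - 1, Θ]`, which contains `[0, Θ]`
    rw [AddCircle.map_restrict_Ioc_eq _ 0 (Θ - 1), sub_add_cancel,
      Measure.map_apply AddCircle.measurable_mk' hA, Measure.restrict_apply' measurableSet_Ioc,
      AddCircle.coe_preimage_coe_image_Icc_inter_Ioc hΘ, F.measure_Icc,
      hH_cont.continuousWithinAt.leftLim_eq,
      ENNReal.toReal_ofReal (sub_nonneg.mpr (hH_mono hΘ.1))]

/-- Let `h` be a continuous non-decreasing degree-one circle map (given by its
lift `H`, non-decreasing with `H(x+1) = H(x)+1`) and `g` an orientation-preserving circle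
homeomorphism (lift `G`) with `h ∘ g = h + ρ`, i.e. `H ∘ G = H + ρ`. Then
`μ([0,θ]) = H(θ) − H(0)` defines a `g`-invariant Borel probability measure on `𝕋`. -/
theorem stmt4 (g : AddCircle (1:ℝ) → AddCircle (1:ℝ)) (G H : ℝ → ℝ) (ρ : ℝ)
    (hg_cont : Continuous g) (hg_bij : Function.Bijective g)
    (hG_cont : Continuous G) (hG_mono : StrictMono G)
    (hG_lift : ∀ x, G (x + 1) = G x + 1)
    (hproj : ∀ x : ℝ, g (x : AddCircle (1:ℝ)) = ((G x : ℝ) : AddCircle (1:ℝ)))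
    (hH_cont : Continuous H) (hH_mono : Monotone H)
    (hH_lift : ∀ x, H (x + 1) = H x + 1)
    (hsemi : ∀ x, H (G x) = H x + ρ) :
    ∃ μ : Measure (AddCircle (1:ℝ)), IsProbabilityMeasure μ ∧ μ.map g = μ ∧
      ∀ Θ ∈ Set.Ico (0:ℝ) 1,
        (μ ((fun t : ℝ => (t : AddCircle (1:ℝ))) '' Set.Icc 0 Θ)).toReal = H Θ - H 0 :=
  stmt4_general g G H ρ hg_cont hG_cont hG_mono hG_lift hproj hH_cont hH_mono hH_lift hsemi
end

section
/- Let g be an orientation-preserving homeomorphism of 𝕋 with irrational rotation number α. Then the g-invariant Borel probability measure on 𝕋 is unique, and any two continuous non-decreasing semi-conjugacies h₁, h₂ with hᵢ ∘ g = hᵢ + α differ by a constant. -/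
/-!
If `h` semiconjugates the lift `f` to the translation by an irrational `α`, then
`h (fⁿ 0 + m) = h 0 + n α + m` for all integers `n`, `m`. As `h` is monotone, the side of `x` on
which the point `fⁿ 0 + m` lies decides on which side of `n α + m` the number `h x - h 0` lies.
Since the numbers `n α + m` are dense, `h x - h 0` depends on `f` only: semiconjugacies are unique
up to an additive constant.

An invariant probability measure `μ` produces such an `h`, the lift
`x ↦ ⌊x⌋ + μ (arc from ⌊x⌋ to x)` of its distribution function, whose increments are the
`μ`-masses of arcs. Invariance makes `h ∘ f - h` constant, and comparing translation numbers
identifies the constant with `τ f`. Two invariant measures therefore have the same distribution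
function, hence agree on arcs, hence coincide.
-/

open MeasureTheory Filter Set Function

theorem Irrational.dense_setOf_int_mul_add_int {α : ℝ} (hα : Irrational α) :
    Dense {r : ℝ | ∃ n m : ℤ, n * α + m = r} := by
  convert dense_addSubgroupClosure_pair_iff (a := α) (b := 1) |>.2 (by simpa using hα) using 1
  ext r
  simp [AddSubgroup.mem_closure_pair]

namespace CircleDeg1Lift

variable {f : CircleDeg1Liftˣ} {α : ℝ}

theorem map_zpow_add_int_of_semiconjBy {h : CircleDeg1Lift}
    (hf : SemiconjBy h f (translate (Multiplicative.ofAdd α))) (n m : ℤ) :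
    h ((f ^ n : CircleDeg1Liftˣ) 0 + m) = h 0 + (n * α + m) := by
  have hn := congrArg (· 0) (hf.units_zpow_right n).eq
  simp only [mul_apply, ← map_zpow, ← ofAdd_zsmul, translate_apply, zsmul_eq_mul] at hn
  rw [map_add_int, hn]
  ring

theorem sub_map_zero_le_of_semiconjBy (hα : Irrational α) {h₁ h₂ : CircleDeg1Lift}
    (h₁f : SemiconjBy h₁ f (translate (Multiplicative.ofAdd α)))
    (h₂f : SemiconjBy h₂ f (translate (Multiplicative.ofAdd α))) (x : ℝ) :
    h₁ x - h₁ 0 ≤ h₂ x - h₂ 0 := by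
  by_contra! hlt
  obtain ⟨_, ⟨n, m, rfl⟩, hlo, hhi⟩ := hα.dense_setOf_int_mul_add_int.exists_between hlt
  set p := (f ^ n : CircleDeg1Liftˣ) 0 + m
  rcases le_or_gt p x with hpx | hxp
  · have := h₂.mono hpx
    rw [map_zpow_add_int_of_semiconjBy h₂f] at this
    linarith
  · have := h₁.mono hxp.le
    rw [map_zpow_add_int_of_semiconjBy h₁f] at this
    linarith

theorem sub_map_zero_eq_of_semiconjBy (hα : Irrational α) {h₁ h₂ : CircleDeg1Lift}
    (h₁f : SemiconjBy h₁ f (translate (Multiplicative.ofAdd α)))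
    (h₂f : SemiconjBy h₂ f (translate (Multiplicative.ofAdd α))) (x : ℝ) :
    h₁ x - h₁ 0 = h₂ x - h₂ 0 :=
  (sub_map_zero_le_of_semiconjBy hα h₁f h₂f x).antisymm
    (sub_map_zero_le_of_semiconjBy hα h₂f h₁f x)

end CircleDeg1Lift

namespace AddCircle

def arcIoc (a b : ℝ) : Set (AddCircle (1 : ℝ)) := ((↑) : ℝ → AddCircle (1 : ℝ)) '' Ioc a b

theorem image_coe_eq_preimage_equivIoc {a : ℝ} {s : Set ℝ} (hs : s ⊆ Ioc a (a + 1)) :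
    ((↑) : ℝ → AddCircle (1 : ℝ)) '' s = (fun z => (equivIoc 1 a z : ℝ)) ⁻¹' s := by
  ext z
  constructor
  · rintro ⟨x, hx, rfl⟩
    simpa [equivIoc_coe_of_mem (hs hx)] using hx
  · exact fun hz => ⟨_, hz, coe_equivIoc⟩

theorem measurable_coe_equivIoc (a : ℝ) :
    Measurable fun z : AddCircle (1 : ℝ) => (equivIoc 1 a z : ℝ) :=
  measurable_subtype_coe.comp (measurableEquivIoc 1 a).measurable

theorem arcIoc_eq_preimage {a b c : ℝ} (hac : a ≤ c) (hba : b ≤ a + 1) :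
    arcIoc c b = (fun z => (equivIoc 1 a z : ℝ)) ⁻¹' Ioc c b :=
  image_coe_eq_preimage_equivIoc fun _ hx => ⟨hac.trans_lt hx.1, hx.2.trans hba⟩

theorem measurableSet_arcIoc {a b : ℝ} (hba : b ≤ a + 1) : MeasurableSet (arcIoc a b) := by
  rw [arcIoc_eq_preimage le_rfl hba]
  exact measurable_coe_equivIoc a measurableSet_Ioc

theorem arcIoc_self_add_one (a : ℝ) : arcIoc a (a + 1) = univ :=
  coe_image_Ioc_eq 1 a

theorem arcIoc_add_one (a b : ℝ) : arcIoc (a + 1) (b + 1) = arcIoc a b := by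
  rw [arcIoc, ← image_add_const_Ioc, image_image]
  simp [arcIoc]

theorem image_arcIoc {f : CircleDeg1Liftˣ} {g : AddCircle (1 : ℝ) → AddCircle (1 : ℝ)}
    (hfg : ∀ x : ℝ, g x = f x) (a b : ℝ) : g '' arcIoc a b = arcIoc (f a) (f b) := by
  rw [arcIoc, image_image, image_congr fun x _ => hfg x, ← image_image, arcIoc,
    ← CircleDeg1Lift.coe_toOrderIso, OrderIso.image_Ioc]

theorem measureReal_arcIoc_add (μ : Measure (AddCircle (1 : ℝ))) [IsFiniteMeasure μ]
    {a b c : ℝ} (hac : a ≤ c) (hcb : c ≤ b) (hba : b ≤ a + 1) :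
    μ.real (arcIoc a b) = μ.real (arcIoc a c) + μ.real (arcIoc c b) := by
  rw [arcIoc_eq_preimage le_rfl hba, arcIoc_eq_preimage le_rfl (hcb.trans hba),
    arcIoc_eq_preimage hac hba, ← Ioc_union_Ioc_eq_Ioc hac hcb, preimage_union]
  exact measureReal_union ((Ioc_disjoint_Ioc_of_le le_rfl).preimage _)
    (measurable_coe_equivIoc a measurableSet_Ioc)

theorem measure_arcIoc_eq_of_map_eq {μ : Measure (AddCircle (1 : ℝ))} {f : CircleDeg1Liftˣ}
    {g : AddCircle (1 : ℝ) → AddCircle (1 : ℝ)} (hg : Measurable g) (hg_inj : Injective g)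
    (hfg : ∀ x : ℝ, g x = f x) (hμ : μ.map g = μ) {a b : ℝ} (hba : b ≤ a + 1) :
    μ (arcIoc (f a) (f b)) = μ (arcIoc a b) := by
  have hfba : f b ≤ f a + 1 := by simpa only [CircleDeg1Lift.map_add_one] using f.1.mono hba
  rw [← image_arcIoc hfg]
  nth_rw 1 [← hμ]
  rw [Measure.map_apply hg (image_arcIoc hfg a b ▸ measurableSet_arcIoc hfba),
    hg_inj.preimage_image]

theorem ext_of_measure_arcIoc {μ ν : Measure (AddCircle (1 : ℝ))} [IsFiniteMeasure μ]
    (h : ∀ a b, 0 ≤ a → a ≤ b → b ≤ 1 → μ (arcIoc a b) = ν (arcIoc a b)) : μ = ν := by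
  -- Transport both measures to `(0, 1] ⊆ ℝ`, where intervals `Ioc` determine a finite measure.
  set r := fun z : AddCircle (1 : ℝ) => (equivIoc 1 0 z : ℝ)
  have hr : Measurable r := measurable_coe_equivIoc 0
  have hmap : ∀ ρ : Measure (AddCircle (1 : ℝ)), (ρ.map r).map (↑) = ρ := fun ρ => by
    rw [Measure.map_map QuotientAddGroup.continuous_mk.measurable hr]
    simp [r, Function.comp_def]
  have hIoc : ∀ s t, μ.map r (Ioc s t) = ν.map r (Ioc s t) := fun s t => by
    have hpre : r ⁻¹' Ioc s t = arcIoc (max s 0) (min t 1) := by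
      rw [arcIoc_eq_preimage (le_max_right s 0) (by simp), ← Ioc_inter_Ioc, preimage_inter]
      exact (inter_eq_left.2 fun z _ => by simpa using (equivIoc 1 0 z).2).symm
    rw [Measure.map_apply hr measurableSet_Ioc, Measure.map_apply hr measurableSet_Ioc, hpre]
    rcases le_or_gt (max s 0) (min t 1) with hst | hts
    · exact h _ _ (le_max_right s 0) hst (min_le_right t 1)
    · simp [arcIoc, Ioc_eq_empty_of_le hts.le]
  have huniv : μ.map r univ = ν.map r univ := by
    rw [Measure.map_apply hr MeasurableSet.univ, Measure.map_apply hr MeasurableSet.univ,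
      preimage_univ]
    have hcircle := arcIoc_self_add_one 0
    rw [zero_add] at hcircle
    rw [← hcircle, h 0 1 le_rfl zero_le_one le_rfl]
  rw [← hmap μ, ← hmap ν, Measure.ext_of_Ioc_finite _ _ huniv fun s t _ => hIoc s t]

end AddCircle

namespace MeasureTheory.Measure

open AddCircle

variable (μ : Measure (AddCircle (1 : ℝ)))

noncomputable def cdfLiftFun (x : ℝ) : ℝ := ⌊x⌋ + μ.real (arcIoc ⌊x⌋ x)

theorem cdfLiftFun_sub [IsProbabilityMeasure μ] {a b : ℝ} (hab : a ≤ b) (hba : b ≤ a + 1) :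
    cdfLiftFun μ b - cdfLiftFun μ a = μ.real (arcIoc a b) := by
  have ha := Int.floor_le a
  have ha' := Int.lt_floor_add_one a
  rcases (Int.floor_le_floor hab).eq_or_lt with hfl | hfl
  · have hb : b ≤ ⌊a⌋ + 1 := by linarith [hfl ▸ Int.lt_floor_add_one b]
    rw [cdfLiftFun, cdfLiftFun, ← hfl, measureReal_arcIoc_add μ ha hab hb]
    ring
  · have hfl : ⌊b⌋ = ⌊a⌋ + 1 := by
      have := Int.floor_le_floor hba
      rw [Int.floor_add_one] at this
      omega
    have hb : (⌊b⌋ : ℝ) = ⌊a⌋ + 1 := by exact_mod_cast hfl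
    have hb' : (⌊a⌋ : ℝ) + 1 ≤ b := hb ▸ Int.floor_le b
    rw [cdfLiftFun, cdfLiftFun, hb, measureReal_arcIoc_add μ ha'.le hb' hba]
    have hfull := measureReal_arcIoc_add μ ha ha'.le le_rfl
    rw [arcIoc_self_add_one, probReal_univ] at hfull
    linarith

theorem cdfLiftFun_add_one (x : ℝ) : cdfLiftFun μ (x + 1) = cdfLiftFun μ x + 1 := by
  rw [cdfLiftFun, cdfLiftFun, Int.floor_add_one, Int.cast_add, Int.cast_one, arcIoc_add_one]
  ring

variable [IsProbabilityMeasure μ]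

theorem monotone_cdfLiftFun : Monotone (cdfLiftFun μ) := by
  intro a b hab
  rcases (Int.floor_le_floor hab).eq_or_lt with hfl | hfl
  · have hb : b ≤ a + 1 := by linarith [hfl ▸ Int.lt_floor_add_one b, Int.floor_le a]
    linarith [cdfLiftFun_sub μ hab hb, measureReal_nonneg (μ := μ) (s := arcIoc a b)]
  · have hfl : (⌊a⌋ : ℝ) + 1 ≤ ⌊b⌋ := by exact_mod_cast hfl
    have ha := measureReal_le_one (μ := μ) (s := arcIoc ⌊a⌋ a)
    have hb := measureReal_nonneg (μ := μ) (s := arcIoc ⌊b⌋ b)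
    rw [cdfLiftFun, cdfLiftFun]
    linarith

noncomputable def cdfLift : CircleDeg1Lift :=
  ⟨⟨cdfLiftFun μ, monotone_cdfLiftFun μ⟩, cdfLiftFun_add_one μ⟩

theorem cdfLift_apply (x : ℝ) : cdfLift μ x = cdfLiftFun μ x := rfl

theorem cdfLift_zero : cdfLift μ 0 = 0 := by
  simp [cdfLift_apply, cdfLiftFun, arcIoc]

variable {μ}

theorem semiconjBy_cdfLift {f : CircleDeg1Liftˣ} {g : AddCircle (1 : ℝ) → AddCircle (1 : ℝ)}
    (hg : Measurable g) (hg_inj : Injective g) (hfg : ∀ x : ℝ, g x = f x) (hμ : μ.map g = μ) :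
    SemiconjBy (cdfLift μ) f
      (CircleDeg1Lift.translate (Multiplicative.ofAdd (CircleDeg1Lift.translationNumber f))) := by
  have hIcc : ∀ y ∈ Icc (0 : ℝ) 1, cdfLift μ (f y) = cdfLift μ (f 0) + cdfLift μ y := by
    rintro y ⟨hy₀, hy₁⟩
    have hfy : f y ≤ f 0 + 1 := by
      rw [← CircleDeg1Lift.map_add_one, zero_add]
      exact (f : CircleDeg1Lift).mono hy₁
    have := cdfLiftFun_sub μ (f.1.mono hy₀) hfy
    rw [measureReal_def, measure_arcIoc_eq_of_map_eq hg hg_inj hfg hμ (by linarith),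
      ← measureReal_def, ← cdfLiftFun_sub μ hy₀ (by linarith)] at this
    have h₀ := cdfLift_zero μ
    simp only [cdfLift_apply] at h₀ ⊢
    linarith
  have hsemi : SemiconjBy (cdfLift μ) f
      (CircleDeg1Lift.translate (Multiplicative.ofAdd (cdfLift μ (f 0)))) := by
    rw [CircleDeg1Lift.semiconjBy_iff_semiconj]
    intro x
    -- `cdfLift μ ∘ f - cdfLift μ` is `1`-periodic, so it takes at `x` its value at `fract x`.
    have h₁ := CircleDeg1Lift.map_fract_sub_fract_eq (cdfLift μ * f) x
    have h₂ := CircleDeg1Lift.map_fract_sub_fract_eq (cdfLift μ) x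
    have h₃ := hIcc (Int.fract x) ⟨Int.fract_nonneg x, (Int.fract_lt_one x).le⟩
    simp only [CircleDeg1Lift.mul_apply] at h₁
    simp only [CircleDeg1Lift.translate_apply]
    linarith
  rwa [CircleDeg1Lift.translationNumber_eq_of_semiconjBy hsemi,
    CircleDeg1Lift.translationNumber_translate]

theorem eq_of_cdfLift_eq {ν : Measure (AddCircle (1 : ℝ))} [IsProbabilityMeasure ν]
    (h : cdfLift μ = cdfLift ν) : μ = ν := by
  refine ext_of_measure_arcIoc fun a b _ hab hb => ?_
  rw [← measureReal_eq_measureReal_iff, ← cdfLiftFun_sub μ hab (by linarith),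
    ← cdfLiftFun_sub ν hab (by linarith), ← cdfLift_apply, ← cdfLift_apply, h]
  rfl

end MeasureTheory.Measure

open CircleDeg1Lift

/-- An orientation-preserving circle homeomorphism `g` (with lift `G`) with
irrational rotation number `α` has a unique invariant Borel probability measure, and any two
continuous non-decreasing degree-one semi-conjugacies to the rotation by `α` (given by
their lifts `H₁, H₂` with `Hᵢ ∘ G = Hᵢ + α`) differ by a constant. -/
theorem stmt5 (g : AddCircle (1:ℝ) → AddCircle (1:ℝ)) (G : ℝ → ℝ) (α : ℝ)
    (hg_cont : Continuous g) (hg_bij : Function.Bijective g)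
    (hG_cont : Continuous G) (hG_mono : StrictMono G)
    (hG_lift : ∀ x, G (x + 1) = G x + 1)
    (hproj : ∀ x : ℝ, g (x : AddCircle (1:ℝ)) = ((G x : ℝ) : AddCircle (1:ℝ)))
    (hα : Tendsto (fun n : ℕ => G^[n] 0 / n) atTop (nhds α))
    (hirr : Irrational α) :
    (∀ μ₁ μ₂ : Measure (AddCircle (1:ℝ)), IsProbabilityMeasure μ₁ → IsProbabilityMeasure μ₂ →
      μ₁.map g = μ₁ → μ₂.map g = μ₂ → μ₁ = μ₂) ∧
    (∀ H₁ H₂ : ℝ → ℝ, Continuous H₁ → Monotone H₁ → (∀ x, H₁ (x + 1) = H₁ x + 1) →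
      Continuous H₂ → Monotone H₂ → (∀ x, H₂ (x + 1) = H₂ x + 1) →
      (∀ x, H₁ (G x) = H₁ x + α) → (∀ x, H₂ (G x) = H₂ x + α) →
      ∃ cst : ℝ, ∀ x, H₁ x = H₂ x + cst) := by
  set F : CircleDeg1Lift := ⟨⟨G, hG_mono.monotone⟩, hG_lift⟩
  obtain ⟨f, hfF⟩ : IsUnit F := isUnit_iff_bijective.2
    ⟨hG_mono.injective, (continuous_iff_surjective F).1 hG_cont⟩
  have hfG : ⇑(f : CircleDeg1Lift) = G := congrArg DFunLike.coe hfF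
  have hτ : translationNumber f = α := translationNumber_eq_of_tendsto₀ f (hfG ▸ hα)
  refine ⟨fun μ₁ μ₂ _ _ hμ₁ hμ₂ => ?_, fun H₁ H₂ _ h₁m h₁l _ h₂m h₂l h₁ h₂ => ?_⟩
  · have hfg : ∀ x : ℝ, g x = f x := fun x => hfG ▸ hproj x
    refine Measure.eq_of_cdfLift_eq (ext fun x => ?_)
    have := sub_map_zero_eq_of_semiconjBy hirr
      (hτ ▸ Measure.semiconjBy_cdfLift hg_cont.measurable hg_bij.1 hfg hμ₁)
      (hτ ▸ Measure.semiconjBy_cdfLift hg_cont.measurable hg_bij.1 hfg hμ₂) x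
    simpa [Measure.cdfLift_zero] using this
  · have hsemi : ∀ (H : ℝ → ℝ) (hm : Monotone H) (hl : ∀ x, H (x + 1) = H x + 1),
        (∀ x, H (G x) = H x + α) →
          SemiconjBy (⟨⟨H, hm⟩, hl⟩ : CircleDeg1Lift) f (translate (Multiplicative.ofAdd α)) :=
      fun H _ _ hH => semiconjBy_iff_semiconj.2 fun x => by
        simp [hfG, hH, add_comm]
    refine ⟨H₁ 0 - H₂ 0, fun x => ?_⟩
    have := sub_map_zero_eq_of_semiconjBy hirr (hsemi H₁ h₁m h₁l h₁) (hsemi H₂ h₂m h₂l h₂) x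
    simp only [coe_mk, OrderHom.coe_mk] at this
    linarith
end

section
/- Let f : 𝔸 → 𝔸 be a C⁰-integrable C¹ symplectic twist diffeomorphism of the annulus 𝔸 = 𝕋 × ℝ, i.e., f preserves a continuous foliation of 𝔸 into graphs of continuous functions η_c : 𝕋 → ℝ with each leaf invariant. Then for every n > 0, the iterate fⁿ is also a symplectic twist diffeomorphism (in particular fⁿ satisfies the twist condition). -/
/-!
On the leaf `η c` the lift acts through the projected dynamics `g_c θ = (F (θ, η c θ)).1`, so
`Fⁿ (θ, η c θ) = (g_cⁿ θ, η c (g_cⁿ θ))`. Each `g_c` is the lift of a circle homeomorphism, hence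
increasing, and `c ↦ g_c θ` is increasing and onto by the twist condition, since `c ↦ η c θ` is.
Therefore `c ↦ g_cⁿ θ` is a continuous increasing bijection of `ℝ` for `n > 0`, and
reparametrising the vertical through `θ` by `r = η c θ` gives the twist condition for `Fⁿ`.
Smoothness, the Jacobian condition and equivariance pass to iterates directly.
-/

/-- A symplectic twist diffeomorphism of the annulus `𝔸 = 𝕋 × ℝ`, described through a lift
`F : ℝ² → ℝ²`: a `C¹` diffeomorphism, equivariant under the deck transformation
(this encodes being a lift of an annulus diffeomorphism isotopic to the identity),
symplectic (Jacobian determinant `1`, preserving `dθ ∧ dr` and orientation), and satisfying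
the twist condition: for each `x`, `r ↦ F₁(x, r)` is an increasing homeomorphism onto `ℝ`
(it is automatically `C¹`). -/
structure TwistLift where
  F : ℝ × ℝ → ℝ × ℝ
  contDiff : ContDiff ℝ 1 F
  inv : ℝ × ℝ → ℝ × ℝ
  left_inv : Function.LeftInverse inv F
  right_inv : Function.RightInverse inv F
  inv_contDiff : ContDiff ℝ 1 inv
  equivariant : ∀ x r, F (x + 1, r) = ((F (x, r)).1 + 1, (F (x, r)).2)
  symplectic : ∀ p, LinearMap.det ((fderiv ℝ F p).toLinearMap) = 1
  twist_mono : ∀ x, StrictMono fun r => (F (x, r)).1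
  twist_surj : ∀ x, Function.Surjective fun r => (F (x, r)).1

/-- `C⁰`-integrability: `η c` is the leaf of average `c` (a continuous graph, expressed via
its periodic lift), the leaves form a continuous foliation of the annulus
(`c ↦ η c θ` is an increasing homeomorphism of `ℝ` for each `θ`, jointly continuous),
and each leaf is invariant: `F` maps the graph of `η c` into itself. -/
def TwistLift.C0Integrable (T : TwistLift) (η : ℝ → ℝ → ℝ) : Prop :=
  Continuous (fun p : ℝ × ℝ => η p.2 p.1) ∧
  (∀ c θ, η c (θ + 1) = η c θ) ∧
  (∀ θ, StrictMono fun c => η c θ) ∧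
  (∀ θ, Function.Surjective fun c => η c θ) ∧
  (∀ c θ, (T.F (θ, η c θ)).2 = η c ((T.F (θ, η c θ)).1))

open Filter Function

section IterateFamily

variable {α β : Type*} [Preorder β] {g : α → β → β}

theorem strictMono_iterate_succ_apply [Preorder α] (hmono : ∀ c, Monotone (g c))
    (hstrict : ∀ θ, StrictMono fun c => g c θ) (n : ℕ) (θ : β) :
    StrictMono fun c => (g c)^[n + 1] θ := by
  induction n with
  | zero => simpa using hstrict θ
  | succ n ih =>
    intro c c' hcc'
    simp only [iterate_succ_apply' _ (n + 1)]
    calc g c ((g c)^[n + 1] θ) ≤ g c ((g c')^[n + 1] θ) := hmono c (ih hcc').le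
      _ < g c' ((g c')^[n + 1] θ) := hstrict _ hcc'

theorem tendsto_iterate_succ_apply_atTop {l : Filter α} (hmono : ∀ c, Monotone (g c))
    (htend : ∀ θ, Tendsto (fun c => g c θ) l atTop) (n : ℕ) (θ : β) :
    Tendsto (fun c => (g c)^[n + 1] θ) l atTop := by
  induction n with
  | zero => simpa using htend θ
  | succ n ih =>
    simp only [iterate_succ_apply' _ (n + 1)]
    refine tendsto_atTop_mono' l ?_ (htend θ)
    filter_upwards [ih.eventually_ge_atTop θ] with c hc using hmono c hc

theorem tendsto_iterate_succ_apply_atBot {l : Filter α} (hmono : ∀ c, Monotone (g c))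
    (htend : ∀ θ, Tendsto (fun c => g c θ) l atBot) (n : ℕ) (θ : β) :
    Tendsto (fun c => (g c)^[n + 1] θ) l atBot :=
  tendsto_iterate_succ_apply_atTop (β := βᵒᵈ) (fun c => (hmono c).dual) htend n θ

end IterateFamily

theorem Continuous.strictMono_of_injective_of_map_add_one {f : ℝ → ℝ} (hf : Continuous f)
    (hinj : Injective f) (hf_add : ∀ x, f (x + 1) = f x + 1) : StrictMono f :=
  (hf.strictMono_of_inj hinj).resolve_right fun hanti => by
    have := hanti (lt_add_one (0 : ℝ))
    rw [hf_add] at this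
    linarith

theorem semiconj_graph_of_invariant {α β : Type*} {F : α × β → α × β} {h : α → β}
    (hinv : ∀ θ, (F (θ, h θ)).2 = h (F (θ, h θ)).1) :
    Semiconj (fun θ => (θ, h θ)) (fun θ => (F (θ, h θ)).1) F :=
  fun θ => Prod.ext rfl (hinv θ).symm

protected theorem ContDiff.iterate {𝕜 E : Type*} [NontriviallyNormedField 𝕜]
    [NormedAddCommGroup E] [NormedSpace 𝕜 E] {n : WithTop ℕ∞} {f : E → E}
    (hf : ContDiff 𝕜 n f) (k : ℕ) : ContDiff 𝕜 n f^[k] := by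
  induction k with
  | zero => exact contDiff_id
  | succ k ih => exact iterate_succ' f k ▸ hf.comp ih

theorem det_fderiv_iterate_eq_one {𝕜 E : Type*} [NontriviallyNormedField 𝕜]
    [NormedAddCommGroup E] [NormedSpace 𝕜 E] {f : E → E} (hf : Differentiable 𝕜 f)
    (hdet : ∀ p, LinearMap.det (fderiv 𝕜 f p).toLinearMap = 1) (k : ℕ) (p : E) :
    LinearMap.det (fderiv 𝕜 f^[k] p).toLinearMap = 1 := by
  induction k generalizing p with
  | zero => simp [fderiv_id]
  | succ k ih =>
    rw [iterate_succ', fderiv_comp p (hf _) (hf.iterate k _),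
      ContinuousLinearMap.toLinearMap_comp, LinearMap.det_comp, ih, hdet, one_mul]

namespace TwistLift

variable (T : TwistLift)

theorem iterate_equivariant (n : ℕ) (x r : ℝ) :
    T.F^[n] (x + 1, r) = ((T.F^[n] (x, r)).1 + 1, (T.F^[n] (x, r)).2) :=
  (Commute.iterate_left (f := T.F) (g := fun p => (p.1 + 1, p.2))
    (fun p => T.equivariant p.1 p.2) n) (x, r)

/-- The projected dynamics `g_c` on the leaf `η c`. -/
def leafMap (η : ℝ → ℝ → ℝ) (c θ : ℝ) : ℝ := (T.F (θ, η c θ)).1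

variable {T} {η : ℝ → ℝ → ℝ} (hint : T.C0Integrable η)
include hint

theorem iterate_apply_leaf (n : ℕ) (c θ : ℝ) :
    T.F^[n] (θ, η c θ) = ((T.leafMap η c)^[n] θ, η c ((T.leafMap η c)^[n] θ)) :=
  ((semiconj_graph_of_invariant (hint.2.2.2.2 c)).iterate_right n θ).symm

theorem leafMap_add_one (c θ : ℝ) : T.leafMap η c (θ + 1) = T.leafMap η c θ + 1 := by
  simp only [leafMap, hint.2.1 c θ, T.equivariant]

theorem strictMono_leafMap (c : ℝ) : StrictMono (T.leafMap η c) := by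
  have hcont : Continuous (T.leafMap η c) :=
    continuous_fst.comp (T.contDiff.continuous.comp
      (continuous_id.prodMk (hint.1.comp (continuous_id.prodMk continuous_const))))
  have hinj : Injective (T.leafMap η c) := fun θ θ' h => by
    have hs := semiconj_graph_of_invariant (hint.2.2.2.2 c)
    have hF : T.F (θ, η c θ) = T.F (θ', η c θ') :=
      (hs θ).symm.trans ((congrArg (fun t => (t, η c t)) h).trans (hs θ'))
    exact congrArg Prod.fst (T.left_inv.injective hF)
  exact hcont.strictMono_of_injective_of_map_add_one hinj (leafMap_add_one hint c)

theorem strictMono_leafMap_apply (θ : ℝ) : StrictMono fun c => T.leafMap η c θ :=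
  (T.twist_mono θ).comp (hint.2.2.1 θ)

theorem surjective_leafMap_apply (θ : ℝ) : Surjective fun c => T.leafMap η c θ :=
  (T.twist_surj θ).comp (hint.2.2.2.1 θ)

theorem tendsto_leafMap_apply_atTop (θ : ℝ) : Tendsto (fun c => T.leafMap η c θ) atTop atTop :=
  ((strictMono_leafMap_apply hint θ).orderIsoOfSurjective _
    (surjective_leafMap_apply hint θ)).tendsto_atTop

theorem tendsto_leafMap_apply_atBot (θ : ℝ) : Tendsto (fun c => T.leafMap η c θ) atBot atBot :=
  ((strictMono_leafMap_apply hint θ).orderIsoOfSurjective _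
    (surjective_leafMap_apply hint θ)).tendsto_atBot

theorem continuous_iterate_leafMap_apply (n : ℕ) (θ : ℝ) :
    Continuous fun c => (T.leafMap η c)^[n] θ := by
  have : Continuous fun c => (T.F^[n] (θ, η c θ)).1 :=
    continuous_fst.comp ((T.contDiff.continuous.iterate n).comp
      (continuous_const.prodMk (hint.1.comp (continuous_const.prodMk continuous_id))))
  simpa only [iterate_apply_leaf hint] using this

theorem twist_iterate {n : ℕ} (hn : 0 < n) (x : ℝ) :
    StrictMono (fun r => (T.F^[n] (x, r)).1) ∧ Surjective (fun r => (T.F^[n] (x, r)).1) := by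
  obtain ⟨m, rfl⟩ := Nat.exists_eq_add_one_of_ne_zero hn.ne'
  let e := StrictMono.orderIsoOfSurjective _ (hint.2.2.1 x) (hint.2.2.2.1 x)
  have hcomp : (fun r => (T.F^[m + 1] (x, r)).1) =
      (fun c => (T.leafMap η c)^[m + 1] x) ∘ e.symm := by
    funext r
    conv_lhs => rw [← e.apply_symm_apply r]
    exact congrArg Prod.fst (iterate_apply_leaf hint _ _ x)
  have hmono c : Monotone (T.leafMap η c) := (strictMono_leafMap hint c).monotone
  rw [hcomp]
  refine ⟨(strictMono_iterate_succ_apply hmono (strictMono_leafMap_apply hint) m x).comp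
    e.symm.strictMono, Surjective.comp ?_ e.symm.surjective⟩
  exact (continuous_iterate_leafMap_apply hint _ x).surjective
    (tendsto_iterate_succ_apply_atTop hmono (tendsto_leafMap_apply_atTop hint) m x)
    (tendsto_iterate_succ_apply_atBot hmono (tendsto_leafMap_apply_atBot hint) m x)

end TwistLift

/-- if `f` is a `C⁰`-integrable `C¹` symplectic twist diffeomorphism of the
annulus, then for every `n > 0` the iterate `fⁿ` is also a symplectic twist diffeomorphism
(in particular `fⁿ` satisfies the twist condition). -/
theorem stmt6 (T : TwistLift) (η : ℝ → ℝ → ℝ) (hint : T.C0Integrable η)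
    (n : ℕ) (hn : 0 < n) :
    ∃ T' : TwistLift, T'.F = T.F^[n] :=
  ⟨{ F := T.F^[n]
     contDiff := T.contDiff.iterate n
     inv := T.inv^[n]
     left_inv := T.left_inv.iterate n
     right_inv := T.right_inv.iterate n
     inv_contDiff := T.inv_contDiff.iterate n
     equivariant := T.iterate_equivariant n
     symplectic :=
       det_fderiv_iterate_eq_one (T.contDiff.differentiable one_ne_zero) T.symplectic n
     twist_mono := fun x => (TwistLift.twist_iterate hint hn x).1
     twist_surj := fun x => (TwistLift.twist_iterate hint hn x).2 }, rfl⟩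
end

section
/- Let u : 𝕋 × ℝ → ℝ, u(θ, c) = (ε(c)/(2π))·sin(2πθ), where ε : ℝ → ℝ is 1/(4π)-Lipschitz but not differentiable at some point c₀. Then u is the generating function of the foliation of 𝔸 by graphs of η_c(θ) = c + ε(c)cos(2πθ) (i.e., ∂u/∂θ(θ,c) = ε(c)cos(2πθ) and u(0,c) = 0), and u is not C¹: the partial derivative ∂u/∂c fails to exist at (θ, c₀) whenever sin(2πθ) ≠ 0. -/
open Real

/-- let `ε : ℝ → ℝ` be `1/(4π)`-Lipschitz but not differentiable at `c₀`,
and `u(θ, c) = (ε(c)/(2π))·sin(2πθ)`. Then `u` is the generating function of the foliation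
by graphs of `η_c(θ) = c + ε(c)cos(2πθ)`: `u(0,c) = 0` and `∂u/∂θ(θ,c) = ε(c)cos(2πθ)`;
and `u` is not `C¹`: `∂u/∂c` fails to exist at `(θ, c₀)` whenever `sin(2πθ) ≠ 0`. -/
theorem stmt15 (ε : ℝ → ℝ) (c₀ : ℝ)
    (hlip : ∀ x y, |ε x - ε y| ≤ (1 / (4 * π)) * |x - y|)
    (hnd : ¬ DifferentiableAt ℝ ε c₀) :
    let u : ℝ → ℝ → ℝ := fun θ c => ε c / (2 * π) * Real.sin (2 * π * θ)
    (∀ c, u 0 c = 0) ∧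
    (∀ θ c, deriv (fun t => u t c) θ = ε c * Real.cos (2 * π * θ)) ∧
    (∀ θ, Real.sin (2 * π * θ) ≠ 0 → ¬ DifferentiableAt ℝ (fun c => u θ c) c₀) := by
  intro u
  have hπ : (2 * π) ≠ 0 := by positivity
  refine ⟨fun c => by simp [u], ?_, ?_⟩
  · intro θ c
    have h1 : deriv (fun t => Real.sin (2 * π * t)) θ = 2 * π * Real.cos (2 * π * θ) := by
      have := (Real.hasDerivAt_sin (2 * π * θ)).comp θ
        ((hasDerivAt_id θ).const_mul (2 * π))
      simpa [mul_comm] using this.deriv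
    have : deriv (fun t => u t c) θ = ε c / (2 * π) * (2 * π * Real.cos (2 * π * θ)) := by
      rw [show (fun t => u t c) = fun t => ε c / (2 * π) * Real.sin (2 * π * t) from rfl,
        deriv_const_mul _ ?_, h1]
      exact (Real.differentiable_sin.comp ((differentiable_id.const_mul _))).differentiableAt
    rw [this]; field_simp
  · intro θ hθ hdiff
    apply hnd
    have h2 : DifferentiableAt ℝ
        (fun c => (fun c => u θ c) c * (2 * π / Real.sin (2 * π * θ))) c₀ :=
      hdiff.mul_const _
    have heq : (fun c => (fun c => u θ c) c * (2 * π / Real.sin (2 * π * θ))) = ε := by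
      funext c
      show ε c / (2 * π) * Real.sin (2 * π * θ) * (2 * π / Real.sin (2 * π * θ)) = ε c
      field_simp
    rwa [heq] at h2
end

section
/- Let f : 𝔸 → 𝔸 be a symplectic twist diffeomorphism admitting an invariant continuous foliation into Lipschitz graphs, and suppose the dynamics on each leaf is topologically conjugate to a rotation via equi-biLipschitz conjugacies: for c in a compact set 𝒦, h_c ∘ g_c = h_c + ρ(c) with h_c and h_c⁻¹ all K̃-Lipschitz, where the foliation is K-Lipschitz on 𝒦 and b_min ≤ ∂F₁/∂r ≤ b_max with b_min > 0 on the corresponding compact region. Then ρ is locally biLipschitz: for c₁ < c₂ in 𝒦, (b_min/(K·K̃))(c₂ − c₁) ≤ ρ(c₂) − ρ(c₁) ≤ K·K̃·b_max·(c₂ − c₁). -/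
lemma aux_nat_shift (w : ℝ → ℝ) (hl : ∀ x, w (x + 1) = w x + 1) :
    ∀ (n : ℕ) (x : ℝ), w (x + n) = w x + n := by
  intro n
  induction n with
  | zero => simp
  | succ k ih =>
    intro x
    push_cast
    rw [← add_assoc, hl (x + k), ih x]; ring

lemma aux_int_shift (w : ℝ → ℝ) (hl : ∀ x, w (x + 1) = w x + 1) :
    ∀ (n : ℤ) (x : ℝ), w (x + n) = w x + n := by
  intro n x
  obtain ⟨m, rfl | rfl⟩ := n.eq_nat_or_neg
  · exact_mod_cast aux_nat_shift w hl m x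
  · have := aux_nat_shift w hl m (x - m)
    push_cast
    push_cast at this
    have e : x - (m:ℝ) + m = x := by ring
    rw [e] at this
    have e2 : x + -(m:ℝ) = x - m := by ring
    rw [e2]
    linarith

lemma aux_lift_bound (w : ℝ → ℝ) (hw : Monotone w) (hl : ∀ x, w (x + 1) = w x + 1)
    (x : ℝ) : |w x - x - w 0| ≤ 1 := by
  set t := Int.fract x with ht
  have ht0 : 0 ≤ t := Int.fract_nonneg x
  have ht1 : t < 1 := Int.fract_lt_one x
  have hx : x = t + (⌊x⌋ : ℝ) := by rw [ht, Int.fract]; ring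
  have hw1 : w x = w t + (⌊x⌋ : ℝ) := by
    conv_lhs => rw [hx]
    exact aux_int_shift w hl ⌊x⌋ t
  have h2 : w 0 ≤ w t := hw ht0
  have h3 : w t ≤ w 0 + 1 := by
    have := hw (le_of_lt ht1)
    have h1 : w 1 = w 0 + 1 := by have := hl 0; simpa using this
    linarith
  rw [abs_le]
  constructor <;> [nlinarith; nlinarith]

lemma aux_nat_bound (A B : ℝ) (hAB : ∀ n : ℕ, (n:ℝ) * A ≤ B) : A ≤ 0 := by
  by_contra hA
  push_neg at hA
  obtain ⟨n, hn⟩ := exists_nat_gt (B / A)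
  have h1 : B < n * A := by
    have := (div_lt_iff₀ hA).1 hn
    linarith
  have := hAB n
  linarith

/-- let `f` be a symplectic twist diffeomorphism (lift `F`, first component
`F₁`, degree one, with `b_min ≤ ∂F₁/∂r ≤ b_max`, `b_min > 0`, on the compact region between
the leaves `η a` and `η b`) with an invariant `K`-Lipschitz foliation into graphs `η c`
for `c ∈ [a, b]`, whose dynamics `g_c(θ) = F₁(θ, η_c(θ))` on each leaf is conjugate to the
rotation by `ρ(c)` via equi-biLipschitz conjugacies `h_c` (lifts, `K̃`-biLipschitz, with
`h_c ∘ g_c = h_c + ρ(c)`). Then `ρ` is biLipschitz on `[a, b]`: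
`(b_min/(K·K̃))(c₂ − c₁) ≤ ρ(c₂) − ρ(c₁) ≤ K·K̃·b_max·(c₂ − c₁)` for `a ≤ c₁ < c₂ ≤ b`. -/
theorem stmt19 (F₁ : ℝ × ℝ → ℝ) (η h : ℝ → ℝ → ℝ) (ρ : ℝ → ℝ)
    (a b K K' bmin bmax : ℝ)
    (hab : a ≤ b) (hK : 1 ≤ K) (hK' : 1 ≤ K') (hbmin : 0 < bmin) (hbb : bmin ≤ bmax)
    (hF_cont : Continuous F₁)
    (hF_lift : ∀ θ r, F₁ (θ + 1, r) = F₁ (θ, r) + 1)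
    (hF_diff : ∀ θ r, DifferentiableAt ℝ (fun s => F₁ (θ, s)) r)
    (hF_bound : ∀ θ r, r ∈ Set.Icc (η a θ) (η b θ) →
      bmin ≤ deriv (fun s => F₁ (θ, s)) r ∧ deriv (fun s => F₁ (θ, s)) r ≤ bmax)
    (hη_cont : Continuous fun p : ℝ × ℝ => η p.2 p.1)
    (hη_per : ∀ c θ, η c (θ + 1) = η c θ)
    (hη_mono : ∀ θ, StrictMono fun c => η c θ)
    (hη_lip : ∀ θ c₁ c₂, a ≤ c₁ → c₁ ≤ c₂ → c₂ ≤ b →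
      (c₂ - c₁) / K ≤ η c₂ θ - η c₁ θ ∧ η c₂ θ - η c₁ θ ≤ K * (c₂ - c₁))
    (hh_lift : ∀ c ∈ Set.Icc a b, ∀ θ, h c (θ + 1) = h c θ + 1)
    (hh_mono : ∀ c ∈ Set.Icc a b, StrictMono (h c))
    (hh_surj : ∀ c ∈ Set.Icc a b, Function.Surjective (h c))
    (hh_bilip : ∀ c ∈ Set.Icc a b, ∀ x y,
      |h c x - h c y| ≤ K' * |x - y| ∧ |x - y| ≤ K' * |h c x - h c y|)
    (hconj : ∀ c ∈ Set.Icc a b, ∀ θ, h c (F₁ (θ, η c θ)) = h c θ + ρ c) :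
    ∀ c₁ c₂, a ≤ c₁ → c₁ < c₂ → c₂ ≤ b →
      (bmin / (K * K')) * (c₂ - c₁) ≤ ρ c₂ - ρ c₁ ∧
      ρ c₂ - ρ c₁ ≤ K * K' * bmax * (c₂ - c₁) := by
  intro c₁ c₂ h1 h2 h3
  have hK0 : (0:ℝ) < K := by linarith
  have hK'0 : (0:ℝ) < K' := by linarith
  have hc₁ : c₁ ∈ Set.Icc a b := ⟨h1, le_trans h2.le h3⟩
  have hc₂ : c₂ ∈ Set.Icc a b := ⟨le_trans h1 h2.le, h3⟩
  have hcc : (0:ℝ) < c₂ - c₁ := by linarith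
  set δ : ℝ := bmin * ((c₂ - c₁) / K) with hδdef
  set δ' : ℝ := bmax * (K * (c₂ - c₁)) with hδ'def
  have hbmax0 : (0:ℝ) < bmax := lt_of_lt_of_le hbmin hbb
  have hδpos : 0 < δ := by positivity
  have hδ'pos : 0 < δ' := mul_pos hbmax0 (by positivity)
  -- MVT key estimate
  have key : ∀ θ : ℝ, δ ≤ F₁ (θ, η c₂ θ) - F₁ (θ, η c₁ θ) ∧
      F₁ (θ, η c₂ θ) - F₁ (θ, η c₁ θ) ≤ δ' := by
    intro θ
    have hr : η c₁ θ < η c₂ θ := hη_mono θ h2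
    have hcont : ContinuousOn (fun s => F₁ (θ, s)) (Set.Icc (η c₁ θ) (η c₂ θ)) :=
      (hF_cont.comp (Continuous.prodMk_right θ)).continuousOn
    have hdiff : ∀ x ∈ Set.Ioo (η c₁ θ) (η c₂ θ),
        HasDerivAt (fun s => F₁ (θ, s)) (deriv (fun s => F₁ (θ, s)) x) x := fun x _ =>
      (hF_diff θ x).hasDerivAt
    obtain ⟨ξ, hξ, hslope⟩ := exists_hasDerivAt_eq_slope (fun s => F₁ (θ, s))
      (deriv (fun s => F₁ (θ, s))) hr hcont hdiff
    have hmem : ξ ∈ Set.Icc (η a θ) (η b θ) := by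
      constructor
      · exact le_trans ((hη_mono θ).monotone h1) hξ.1.le
      · exact le_trans hξ.2.le ((hη_mono θ).monotone h3)
    obtain ⟨hd1, hd2⟩ := hF_bound θ ξ hmem
    obtain ⟨hl1, hl2⟩ := hη_lip θ c₁ c₂ h1 h2.le h3
    have hΔ : F₁ (θ, η c₂ θ) - F₁ (θ, η c₁ θ) =
        deriv (fun s => F₁ (θ, s)) ξ * (η c₂ θ - η c₁ θ) := by
      rw [eq_div_iff (by intro hz; nlinarith : η c₂ θ - η c₁ θ ≠ 0)] at hslope
      linarith [hslope]
    constructor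
    · rw [hΔ, hδdef]
      have h0 : (c₂ - c₁) / K ≤ η c₂ θ - η c₁ θ := hl1
      nlinarith [mul_le_mul_of_nonneg_left h0 hbmin.le,
        mul_le_mul_of_nonneg_right hd1 (by linarith : (0:ℝ) ≤ η c₂ θ - η c₁ θ)]
    · rw [hΔ, hδ'def]
      nlinarith [mul_le_mul_of_nonneg_right hd2 (by linarith : (0:ℝ) ≤ η c₂ θ - η c₁ θ),
        mul_le_mul_of_nonneg_left hl2 hbmax0.le]
  have hm1 : Monotone (h c₁) := (hh_mono c₁ hc₁).monotone
  have hm2 : Monotone (h c₂) := (hh_mono c₂ hc₂).monotone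
  have hlift1 := hh_lift c₁ hc₁
  have hlift2 := hh_lift c₂ hc₂
  constructor
  · -- lower bound: iterate on leaf c₁
    set x : ℕ → ℝ := fun n => Nat.rec (0:ℝ) (fun _ xn => F₁ (xn, η c₁ xn)) n with hxdef
    have hxsucc : ∀ n, x (n + 1) = F₁ (x n, η c₁ (x n)) := fun n => rfl
    have hx0 : x 0 = 0 := rfl
    clear_value x
    have hvx : ∀ n : ℕ, h c₁ (x n) = h c₁ 0 + n * ρ c₁ := by
      intro n
      induction n with
      | zero => rw [hx0]; norm_num
      | succ k ih =>
        rw [hxsucc, hconj c₁ hc₁ (x k), ih]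
        push_cast; ring
    have hux : ∀ n : ℕ, h c₂ (x n) ≤ h c₂ 0 + n * (ρ c₂ - δ / K') := by
      intro n
      induction n with
      | zero => rw [hx0]; norm_num
      | succ k ih =>
        set G2 := F₁ (x k, η c₂ (x k)) with hG2
        have hstep1 : x (k + 1) ≤ G2 - δ := by
          have := (key (x k)).1
          rw [hxsucc]
          linarith
        have hstep2 : h c₂ (x (k + 1)) ≤ h c₂ (G2 - δ) := hm2 hstep1
        have hstep3 : δ ≤ K' * (h c₂ G2 - h c₂ (G2 - δ)) := by
          have hb := (hh_bilip c₂ hc₂ G2 (G2 - δ)).2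
          have hmn : h c₂ (G2 - δ) ≤ h c₂ G2 := hm2 (by linarith)
          rw [abs_of_nonneg (by linarith : (0:ℝ) ≤ G2 - (G2 - δ)),
            abs_of_nonneg (by linarith)] at hb
          linarith
        have hstep4 : h c₂ G2 = h c₂ (x k) + ρ c₂ := hconj c₂ hc₂ (x k)
        have hKne : K' ≠ 0 := ne_of_gt hK'0
        have hdiv : h c₂ (G2 - δ) ≤ h c₂ G2 - δ / K' := by
          have hq : δ / K' ≤ h c₂ G2 - h c₂ (G2 - δ) := by
            rw [div_le_iff₀ hK'0]
            nlinarith [hstep3]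
          linarith
        push_cast
        linarith [hstep2, hdiv, hstep4, ih]
    -- translate to bounds on x n
    have hxlow : ∀ n : ℕ, (n:ℝ) * ρ c₁ - 1 ≤ x n := by
      intro n
      have hb := aux_lift_bound (h c₁) hm1 hlift1 (x n)
      rw [hvx n] at hb
      rw [abs_le] at hb
      linarith [hb.1, hb.2]
    have hxhigh : ∀ n : ℕ, x n ≤ (n:ℝ) * (ρ c₂ - δ / K') + 1 := by
      intro n
      have hb := aux_lift_bound (h c₂) hm2 hlift2 (x n)
      rw [abs_le] at hb
      have := hux n
      linarith [hb.1, hb.2]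
    have hfin : ρ c₁ - (ρ c₂ - δ / K') ≤ 0 := by
      apply aux_nat_bound _ 2
      intro n
      have := hxlow n
      have := hxhigh n
      nlinarith
    have heq : (bmin / (K * K')) * (c₂ - c₁) = δ / K' := by
      rw [hδdef]; field_simp
    linarith [heq.le, heq.ge]
  · -- upper bound: iterate on leaf c₂
    set y : ℕ → ℝ := fun n => Nat.rec (0:ℝ) (fun _ yn => F₁ (yn, η c₂ yn)) n with hydef
    have hysucc : ∀ n, y (n + 1) = F₁ (y n, η c₂ (y n)) := fun n => rfl
    have hy0 : y 0 = 0 := rfl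
    clear_value y
    have hvy : ∀ n : ℕ, h c₂ (y n) = h c₂ 0 + n * ρ c₂ := by
      intro n
      induction n with
      | zero => rw [hy0]; norm_num
      | succ k ih =>
        rw [hysucc, hconj c₂ hc₂ (y k), ih]
        push_cast; ring
    have huy : ∀ n : ℕ, h c₁ (y n) ≤ h c₁ 0 + n * (ρ c₁ + K' * δ') := by
      intro n
      induction n with
      | zero => rw [hy0]; norm_num
      | succ k ih =>
        set G1 := F₁ (y k, η c₁ (y k)) with hG1
        have hstep1 : y (k + 1) ≤ G1 + δ' := by
          have := (key (y k)).2
          rw [hysucc]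
          linarith
        have hstep2 : h c₁ (y (k + 1)) ≤ h c₁ (G1 + δ') := hm1 hstep1
        have hstep3 : h c₁ (G1 + δ') - h c₁ G1 ≤ K' * δ' := by
          have hb := (hh_bilip c₁ hc₁ (G1 + δ') G1).1
          have hmn : h c₁ G1 ≤ h c₁ (G1 + δ') := hm1 (by linarith)
          rw [abs_of_nonneg (by linarith), abs_of_nonneg (by linarith)] at hb
          linarith
        have hstep4 : h c₁ G1 = h c₁ (y k) + ρ c₁ := hconj c₁ hc₁ (y k)
        push_cast
        linarith [hstep2, hstep3, hstep4, ih]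
    have hylow : ∀ n : ℕ, (n:ℝ) * ρ c₂ - 1 ≤ y n := by
      intro n
      have hb := aux_lift_bound (h c₂) hm2 hlift2 (y n)
      rw [hvy n] at hb
      rw [abs_le] at hb
      linarith [hb.1, hb.2]
    have hyhigh : ∀ n : ℕ, y n ≤ (n:ℝ) * (ρ c₁ + K' * δ') + 1 := by
      intro n
      have hb := aux_lift_bound (h c₁) hm1 hlift1 (y n)
      rw [abs_le] at hb
      have := huy n
      linarith [hb.1, hb.2]
    have hfin : ρ c₂ - (ρ c₁ + K' * δ') ≤ 0 := by
      apply aux_nat_bound _ 2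
      intro n
      have := hylow n
      have := hyhigh n
      nlinarith
    have heq : K * K' * bmax * (c₂ - c₁) = K' * δ' := by
      rw [hδ'def]; ring
    linarith [heq.le, heq.ge]
end
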